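/- arXiv:1906.09570 — 7 statements merged into one kernel-verified Lean document; each statement's English description precedes it below -/
import Mathlib

section
/- Define à_n = A_n C_{n-1} - A_{n-1} C_n. Then à_n satisfies the recurrence à_n = -b_n Ã_{n-1} - a_{n-1} Ã_{n-2} + Ã_{n-3} for n ≥ 2, with initial values Ã_{-1} = 0, Ã_0 = -1, Ã_1 = b_1. -/
namespace ThirdOrderRecurrence

variable {R : Type*} [CommRing R]

def IsSolution (p q u : ℕ → R) : Prop :=
  ∀ n, u (n + 3) = p n * u (n + 2) + q n * u (n + 1) + u n

def casoratian (x y : ℕ → R) (n : ℕ) : R :=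
  x (n + 1) * y n - x n * y (n + 1)

/- Eliminating `x (n + 4)` leaves `-q (n + 1)` times the previous Casoratian plus the
"gap-two" term `x (n + 1) * y (n + 3) - x (n + 3) * y (n + 1)`; eliminating `x (n + 3)`
in that term gives `-p n * casoratian x y (n + 1) + casoratian x y n`. -/
theorem casoratian_add_three {p q x y : ℕ → R} (hx : IsSolution p q x) (hy : IsSolution p q y)
    (n : ℕ) :
    casoratian x y (n + 3) =
      -q (n + 1) * casoratian x y (n + 2) - p n * casoratian x y (n + 1) + casoratian x y n := by
  unfold casoratian
  linear_combination y (n + 3) * hx (n + 1) - x (n + 3) * hy (n + 1)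
    + x (n + 1) * hy n - y (n + 1) * hx n

end ThirdOrderRecurrence

open ThirdOrderRecurrence in
/-- Indexing: `A (n+2)` is the paper's `A_n` and `tA (n+1)` is the paper's `Ã_n`. -/
theorem mcf_tilde_A_recurrence (R : Type*) [CommRing R] (a b A C tA : ℕ → R)
    (hA0 : A 0 = 0) (hA1 : A 1 = 1) (hA2 : A 2 = a 0)
    (hC0 : C 0 = 0) (hC1 : C 1 = 0) (hC2 : C 2 = 1)
    (hA : ∀ n, A (n + 3) = a (n + 1) * A (n + 2) + b (n + 1) * A (n + 1) + A n)
    (hC : ∀ n, C (n + 3) = a (n + 1) * C (n + 2) + b (n + 1) * C (n + 1) + C n)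
    (htA : ∀ n, tA n = A (n + 1) * C n - A n * C (n + 1)) :
    tA 0 = 0 ∧ tA 1 = -1 ∧ tA 2 = b 1 ∧
      ∀ n, tA (n + 3) = -b (n + 2) * tA (n + 2) - a (n + 1) * tA (n + 1) + tA n := by
  obtain rfl : tA = casoratian A C := funext htA
  refine ⟨?_, ?_, ?_, casoratian_add_three (p := fun n ↦ a (n + 1)) hA hC⟩
  · simp [casoratian, hA0, hA1, hC0, hC1]
  · simp [casoratian, hA1, hA2, hC1, hC2]
  · simp only [casoratian, hA 0, hC 0, hA0, hA1, hA2, hC0, hC1, hC2]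
    ring
end

section
/- Let [(a_0, a_1, …), (b_0, b_1, …)] be the p-adic MCF expansion of (α, β) ∈ ℚ_p². Then for all n, ν_p(α - A_n/C_n) ≥ K_n + ⌊(n+2)/2⌋ and ν_p(β - B_n/C_n) ≥ K_n + ⌊(n+3)/2⌋, where K_n = -ν_p(C_n). -/
/-- The Browkin `s`-function on `ℚ_p`: sends `α` to the truncation of its
`p`-adic expansion (digits in `(-p/2, p/2)`) to non-positive powers of `p`.
It is characterized by: `s α ∈ ℤ[1/p]`, `|s α|_∞ < p/2`, and `|α - s α|_p < 1`. -/
structure BrowkinS (p : ℕ) [Fact (Nat.Prime p)] where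
  s : ℚ_[p] → ℚ
  s_int : ∀ x, ∃ (z : ℤ) (k : ℕ), s x = (z : ℚ) / (p : ℚ) ^ k
  s_bound : ∀ x, |s x| < (p : ℚ) / 2
  s_close : ∀ x, ‖x - (s x : ℚ_[p])‖ < 1

/-- An infinite `p`-adic multidimensional continued fraction (dimension 2),
produced by the `p`-adic Jacobi–Perron algorithm: `al 0 = α`, `be 0 = β`,
`a_n = s(α_n)`, `b_n = s(β_n)`, `α_{n+1} = 1/(β_n - b_n)`,
`β_{n+1} = (α_n - a_n)/(β_n - b_n)`, and the algorithm never stops. -/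
structure PMCF (p : ℕ) [Fact (Nat.Prime p)] where
  s : ℚ_[p] → ℚ
  s_int : ∀ x, ∃ (z : ℤ) (k : ℕ), s x = (z : ℚ) / (p : ℚ) ^ k
  s_bound : ∀ x, |s x| < (p : ℚ) / 2
  s_close : ∀ x, ‖x - (s x : ℚ_[p])‖ < 1
  al : ℕ → ℚ_[p]
  be : ℕ → ℚ_[p]
  ne : ∀ n, be n - (s (be n) : ℚ_[p]) ≠ 0
  ral : ∀ n, al (n + 1) = (be n - (s (be n) : ℚ_[p]))⁻¹
  rbe : ∀ n, be (n + 1) = (al n - (s (al n) : ℚ_[p])) * (be n - (s (be n) : ℚ_[p]))⁻¹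

namespace PMCF

variable {p : ℕ} [Fact (Nat.Prime p)]

/-- Partial quotients `a_n = s(α_n)`. -/
def a (m : PMCF p) (n : ℕ) : ℚ := m.s (m.al n)

/-- Partial quotients `b_n = s(β_n)`. -/
def b (m : PMCF p) (n : ℕ) : ℚ := m.s (m.be n)

/-- Numerators `A`: indices shifted by `2`, so `A (n+2)` is the paper's `A_n`
(`A_{-2} = 0`, `A_{-1} = 1`, `A_0 = a_0`). -/
def A (m : PMCF p) : ℕ → ℚ
  | 0 => 0
  | 1 => 1
  | 2 => a m 0
  | n + 3 => a m (n + 1) * A m (n + 2) + b m (n + 1) * A m (n + 1) + A m n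

/-- Numerators `B` (shifted by `2`): `B_{-2} = 1`, `B_{-1} = 0`, `B_0 = b_0`. -/
def B (m : PMCF p) : ℕ → ℚ
  | 0 => 1
  | 1 => 0
  | 2 => b m 0
  | n + 3 => a m (n + 1) * B m (n + 2) + b m (n + 1) * B m (n + 1) + B m n

/-- Denominators `C` (shifted by `2`): `C_{-2} = 0`, `C_{-1} = 0`, `C_0 = 1`. -/
def C (m : PMCF p) : ℕ → ℚ
  | 0 => 0
  | 1 => 0
  | 2 => 1
  | n + 3 => a m (n + 1) * C m (n + 2) + b m (n + 1) * C m (n + 1) + C m n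

/-- `K_n = k_1 + ⋯ + k_n` where `k_i = ν_p(1/a_i)`. -/
def K (m : PMCF p) (n : ℕ) : ℤ := -∑ i ∈ Finset.Icc 1 n, padicValRat p (a m i)

/-- `k_n = ν_p(1/a_n)`. -/
def kk (m : PMCF p) (n : ℕ) : ℤ := -padicValRat p (a m n)

/-- `V_n^α = C_n α - A_n` (paper indexing). -/
noncomputable def Va (m : PMCF p) (n : ℕ) : ℚ_[p] :=
  ((C m (n + 2) : ℚ) : ℚ_[p]) * m.al 0 - ((A m (n + 2) : ℚ) : ℚ_[p])

/-- `V_n^β = C_n β - B_n` (paper indexing). -/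
noncomputable def Vb (m : PMCF p) (n : ℕ) : ℚ_[p] :=
  ((C m (n + 2) : ℚ) : ℚ_[p]) * m.be 0 - ((B m (n + 2) : ℚ) : ℚ_[p])

end PMCF

/-!
Write `ε_n = α_n - a_n` and `δ_n = β_n - b_n`; both have norm `< 1`, hence `≤ 1/p`, and the
algorithm reads `α_{n+1} = 1/δ_n`, `β_{n+1} = ε_n/δ_n`. Substituting this into the recurrence
shared by `A`, `B`, `C` shows that the errors `C_j α - A_j` and `C_j β - B_j` satisfy the two-term
recurrence `U_{j+2} = -ε_j U_{j+1} - δ_j U_j`, so they gain a factor `1/p` every two steps.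
On the other hand `|b_n| < |a_n|` and `|a_n| > 1` make `a_n C_{n-1}` the dominant term of `C_n`,
so `|C_n| = |a_1 ⋯ a_n| = p^{K_n}`. Dividing the first estimate by the second gives the bounds.
-/

section Ultrametric

variable {K : Type*} [NormedField K] [IsUltrametricDist K]

open IsUltrametricDist

theorem norm_add_eq_left_of_norm_lt {x y : K} (h : ‖y‖ < ‖x‖) : ‖x + y‖ = ‖x‖ := by
  rw [norm_add_eq_max_of_norm_ne_norm h.ne', max_eq_left h.le]

theorem norm_mul_add_mul_add_of_dominant {a b x y z : K} (ha : 1 < ‖a‖) (hb : ‖b‖ < ‖a‖)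
    (hx : ‖x‖ < ‖z‖) (hy : ‖y‖ < ‖z‖) : ‖a * z + (b * y + x)‖ = ‖a‖ * ‖z‖ := by
  have hz : 0 < ‖z‖ := (norm_nonneg y).trans_lt hy
  have hby : ‖b * y‖ < ‖a * z‖ := by
    rw [norm_mul, norm_mul]
    calc ‖b‖ * ‖y‖ ≤ ‖b‖ * ‖z‖ := by gcongr
      _ < ‖a‖ * ‖z‖ := by gcongr
  have hx' : ‖x‖ < ‖a * z‖ := by
    rw [norm_mul]
    calc ‖x‖ < ‖z‖ := hx
      _ = 1 * ‖z‖ := (one_mul _).symm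
      _ < ‖a‖ * ‖z‖ := by gcongr
  rw [norm_add_eq_left_of_norm_lt ((norm_add_le_max _ _).trans_lt (max_lt hby hx')), norm_mul]

theorem norm_succ_succ_succ_of_dominant {a b x : ℕ → K} (ha : ∀ k, 1 < ‖a k‖)
    (hb : ∀ k, ‖b k‖ < ‖a k‖) (hx : ∀ k, x (k + 3) = a k * x (k + 2) + b k * x (k + 1) + x k)
    (h0 : ‖x 0‖ < ‖x 2‖) (h1 : ‖x 1‖ < ‖x 2‖) (n : ℕ) :
    ‖x (n + 3)‖ = ‖a n‖ * ‖x (n + 2)‖ := by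
  have step : ∀ k, ‖x k‖ < ‖x (k + 2)‖ → ‖x (k + 1)‖ < ‖x (k + 2)‖ →
      ‖x (k + 3)‖ = ‖a k‖ * ‖x (k + 2)‖ := fun k hk hk1 => by
    rw [hx, add_assoc]; exact norm_mul_add_mul_add_of_dominant (ha k) (hb k) hk hk1
  have growth : ∀ k, ‖x k‖ < ‖x (k + 2)‖ ∧ ‖x (k + 1)‖ < ‖x (k + 2)‖ := by
    intro k
    induction k with
    | zero => exact ⟨h0, h1⟩
    | succ k ih =>
      have hlt : ‖x (k + 2)‖ < ‖x (k + 3)‖ := by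
        rw [step k ih.1 ih.2]
        exact lt_mul_of_one_lt_left ((norm_nonneg _).trans_lt ih.2) (ha k)
      exact ⟨ih.2.trans hlt, hlt⟩
  exact step n (growth n).1 (growth n).2

theorem norm_le_pow_half_of_two_term {ε δ U : ℕ → K} {r : ℝ} (hr : r ≤ 1)
    (hε : ∀ k, ‖ε k‖ ≤ r) (hδ : ∀ k, ‖δ k‖ ≤ r)
    (hU : ∀ k, U (k + 2) = -ε k * U (k + 1) - δ k * U k) {c : ℕ}
    (h0 : ‖U 0‖ ≤ r ^ (c / 2)) (h1 : ‖U 1‖ ≤ r ^ ((1 + c) / 2)) (n : ℕ) :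
    ‖U n‖ ≤ r ^ ((n + c) / 2) := by
  have hr0 : 0 ≤ r := (norm_nonneg _).trans (hε 0)
  induction n using Nat.twoStepInduction with
  | zero => simpa using h0
  | one => exact h1
  | more k ihk ihk1 =>
    have hk1 : ‖U (k + 1)‖ ≤ r ^ ((k + c) / 2) :=
      ihk1.trans (pow_le_pow_of_le_one hr0 hr (by omega))
    have hexp : (k + 2 + c) / 2 = (k + c) / 2 + 1 := by omega
    rw [hU, sub_eq_add_neg, neg_mul, hexp, pow_succ']
    refine (norm_add_le_max _ _).trans (max_le ?_ ?_) <;> rw [norm_neg, norm_mul]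
    · exact mul_le_mul (hε k) hk1 (norm_nonneg _) hr0
    · exact mul_le_mul (hδ k) ihk (norm_nonneg _) hr0

end Ultrametric

theorem Padic.norm_le_inv_of_norm_lt_one {p : ℕ} [Fact (Nat.Prime p)] {x : ℚ_[p]}
    (hx : ‖x‖ < 1) : ‖x‖ ≤ (p : ℝ)⁻¹ := by
  simpa using (Padic.norm_le_pow_iff_norm_lt_pow_add_one x (-1)).mpr (by simpa using hx)

namespace PMCF

variable {p : ℕ} [Fact (Nat.Prime p)] (m : PMCF p)

noncomputable def eps (n : ℕ) : ℚ_[p] := m.al n - m.a n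

noncomputable def del (n : ℕ) : ℚ_[p] := m.be n - m.b n

theorem norm_eps_lt_one (n : ℕ) : ‖m.eps n‖ < 1 := m.s_close _

theorem norm_del_lt_one (n : ℕ) : ‖m.del n‖ < 1 := m.s_close _

theorem del_ne_zero (n : ℕ) : m.del n ≠ 0 := m.ne n

theorem al_succ (n : ℕ) : m.al (n + 1) = (m.del n)⁻¹ := m.ral n

theorem be_succ (n : ℕ) : m.be (n + 1) = m.eps n * (m.del n)⁻¹ := m.rbe n

theorem one_lt_norm_al_succ (n : ℕ) : 1 < ‖m.al (n + 1)‖ := by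
  rw [al_succ, norm_inv]
  exact (one_lt_inv₀ (norm_pos_iff.mpr (m.del_ne_zero n))).mpr (m.norm_del_lt_one n)

theorem norm_a_succ (n : ℕ) : ‖(m.a (n + 1) : ℚ_[p])‖ = ‖m.al (n + 1)‖ := by
  have h : (m.a (n + 1) : ℚ_[p]) = m.al (n + 1) + -m.eps (n + 1) := by
    rw [eps]; ring
  rw [h, norm_add_eq_left_of_norm_lt]
  simpa only [norm_neg] using (m.norm_eps_lt_one _).trans (m.one_lt_norm_al_succ n)

theorem one_lt_norm_a_succ (n : ℕ) : 1 < ‖(m.a (n + 1) : ℚ_[p])‖ := by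
  rw [norm_a_succ]; exact m.one_lt_norm_al_succ n

theorem norm_b_succ_lt (n : ℕ) : ‖(m.b (n + 1) : ℚ_[p])‖ < ‖(m.a (n + 1) : ℚ_[p])‖ := by
  have hbe : ‖m.be (n + 1)‖ < ‖(m.a (n + 1) : ℚ_[p])‖ := by
    rw [norm_a_succ, al_succ, be_succ, norm_mul]
    have hδ : 0 < ‖(m.del n)⁻¹‖ := norm_pos_iff.mpr (inv_ne_zero (m.del_ne_zero n))
    exact mul_lt_of_lt_one_left hδ (m.norm_eps_lt_one n)
  have h : (m.b (n + 1) : ℚ_[p]) = m.be (n + 1) + -m.del (n + 1) := by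
    rw [del]; ring
  rw [h]
  refine (IsUltrametricDist.norm_add_le_max _ _).trans_lt (max_lt hbe ?_)
  rw [norm_neg]
  exact (m.norm_del_lt_one _).trans (m.one_lt_norm_a_succ n)

theorem a_succ_ne_zero (n : ℕ) : m.a (n + 1) ≠ 0 := by
  have h := zero_le_one.trans_lt (m.one_lt_norm_a_succ n)
  exact_mod_cast norm_pos_iff.mp h

theorem norm_a_succ_eq_zpow (n : ℕ) :
    ‖(m.a (n + 1) : ℚ_[p])‖ = (p : ℝ) ^ (-padicValRat p (m.a (n + 1))) := by
  rw [Padic.eq_padicNorm, padicNorm.eq_zpow_of_nonzero (m.a_succ_ne_zero n)]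
  push_cast; rfl

theorem C_add_three (n : ℕ) :
    m.C (n + 3) = m.a (n + 1) * m.C (n + 2) + m.b (n + 1) * m.C (n + 1) + m.C n := rfl

theorem norm_C (n : ℕ) : ‖(m.C (n + 2) : ℚ_[p])‖ = (p : ℝ) ^ m.K n := by
  have hgrowth := norm_succ_succ_succ_of_dominant (x := fun k => (m.C k : ℚ_[p]))
    m.one_lt_norm_a_succ m.norm_b_succ_lt (fun k => by simp [C_add_three])
    (by simp [C]) (by simp [C])
  induction n with
  | zero => simp [C, K]
  | succ n ih =>
    rw [hgrowth, ih, norm_a_succ_eq_zpow, K, K, Finset.sum_Icc_succ_top (by omega),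
      ← zpow_add₀ (by exact_mod_cast (Fact.out : p.Prime).ne_zero)]
    congr 1; ring

theorem two_term_of_three_term {U : ℕ → ℚ_[p]}
    (hU : ∀ k, U (k + 3) = m.a (k + 1) * U (k + 2) + m.b (k + 1) * U (k + 1) + U k)
    (h2 : U 2 = -m.eps 0 * U 1 - m.del 0 * U 0) (n : ℕ) :
    U (n + 2) = -m.eps n * U (n + 1) - m.del n * U n := by
  induction n with
  | zero => exact h2
  | succ k ih =>
    have hδ := m.del_ne_zero k
    have hε : m.eps (k + 1) = (m.del k)⁻¹ - m.a (k + 1) := by rw [eps, al_succ]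
    have hδ' : m.del (k + 1) = m.eps k * (m.del k)⁻¹ - m.b (k + 1) := by rw [del, be_succ]
    have hUk : U k = -(U (k + 2) + m.eps k * U (k + 1)) / m.del k := by
      rw [ih]; field_simp; ring
    rw [hU k, hUk, hε, hδ']
    field_simp
    ring

/-- `X` stands for `A` or `B` and `x` for `α` or `β`; `c` is `0` or `1` according to whether the
error `C_j x - X_j` starts from `(0, -1)` or from `(-1, 0)`. -/
theorem norm_sub_div_C_le {X : ℕ → ℚ} (x : ℚ_[p])
    (hX : ∀ k, X (k + 3) = m.a (k + 1) * X (k + 2) + m.b (k + 1) * X (k + 1) + X k)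
    (h2 : x - X 2 = m.eps 0 * X 1 + m.del 0 * X 0) {c : ℕ}
    (h0 : ‖(X 0 : ℚ_[p])‖ ≤ (p : ℝ)⁻¹ ^ (c / 2))
    (h1 : ‖(X 1 : ℚ_[p])‖ ≤ (p : ℝ)⁻¹ ^ ((1 + c) / 2)) (n : ℕ) :
    ‖x - X (n + 2) / m.C (n + 2)‖ ≤ (p : ℝ) ^ (-(m.K n + ((n + 2 + c) / 2 : ℕ))) := by
  set U : ℕ → ℚ_[p] := fun j => m.C j * x - X j
  have hUrec : ∀ k, U (k + 3) = m.a (k + 1) * U (k + 2) + m.b (k + 1) * U (k + 1) + U k := by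
    intro k; simp only [U, C_add_three, hX]; push_cast; ring
  have hU2 : U 2 = -m.eps 0 * U 1 - m.del 0 * U 0 := by
    simp only [U, C]; push_cast; linear_combination h2
  have hp : (1 : ℝ) ≤ p := by exact_mod_cast (Fact.out : p.Prime).one_lt.le
  have hU : ‖U (n + 2)‖ ≤ (p : ℝ)⁻¹ ^ ((n + 2 + c) / 2) :=
    norm_le_pow_half_of_two_term (inv_le_one_of_one_le₀ hp)
      (fun k => Padic.norm_le_inv_of_norm_lt_one (m.norm_eps_lt_one k))
      (fun k => Padic.norm_le_inv_of_norm_lt_one (m.norm_del_lt_one k))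
      (m.two_term_of_three_term hUrec hU2) (by simpa [U, C] using h0) (by simpa [U, C] using h1)
      (n + 2)
  have hC : (m.C (n + 2) : ℚ_[p]) ≠ 0 := by
    rw [← norm_pos_iff, norm_C]; positivity
  have hdiv : x - X (n + 2) / m.C (n + 2) = U (n + 2) / m.C (n + 2) := by
    simp only [U]; field_simp
  rw [hdiv, norm_div, norm_C, div_le_iff₀ (by positivity), neg_add, zpow_add₀ (by positivity),
    zpow_neg, zpow_neg, zpow_natCast, mul_right_comm, inv_mul_cancel₀ (by positivity), one_mul,
    ← inv_pow]
  exact hU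

end PMCF

theorem pmcf_rate_of_convergence_general (p : ℕ) [Fact (Nat.Prime p)]
    (m : PMCF p) (n : ℕ) :
    ‖m.al 0 - ((PMCF.A m (n + 2) : ℚ) : ℚ_[p]) / ((PMCF.C m (n + 2) : ℚ) : ℚ_[p])‖ ≤
        (p : ℝ) ^ (-(PMCF.K m n + (((n + 2) / 2 : ℕ) : ℤ))) ∧
      ‖m.be 0 - ((PMCF.B m (n + 2) : ℚ) : ℚ_[p]) / ((PMCF.C m (n + 2) : ℚ) : ℚ_[p])‖ ≤
        (p : ℝ) ^ (-(PMCF.K m n + (((n + 3) / 2 : ℕ) : ℤ))) :=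
  ⟨m.norm_sub_div_C_le (m.al 0) (fun _ => rfl) (by simp [PMCF.A, PMCF.eps]) (c := 0)
      (by simp [PMCF.A]) (by simp [PMCF.A]) n,
    m.norm_sub_div_C_le (m.be 0) (fun _ => rfl) (by simp [PMCF.B, PMCF.del]) (c := 1)
      (by simp [PMCF.B]) (by simp [PMCF.B]) n⟩

/-- Rate of convergence: `ν_p(α - A_n/C_n) ≥ K_n + ⌊(n+2)/2⌋` and
`ν_p(β - B_n/C_n) ≥ K_n + ⌊(n+3)/2⌋` (stated via the `p`-adic norm). -/
theorem pmcf_rate_of_convergence (p : ℕ) [Fact (Nat.Prime p)] (hp : Odd p)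
    (m : PMCF p) (n : ℕ) :
    ‖m.al 0 - ((PMCF.A m (n + 2) : ℚ) : ℚ_[p]) / ((PMCF.C m (n + 2) : ℚ) : ℚ_[p])‖ ≤
        (p : ℝ) ^ (-(PMCF.K m n + (((n + 2) / 2 : ℕ) : ℤ))) ∧
      ‖m.be 0 - ((PMCF.B m (n + 2) : ℚ) : ℚ_[p]) / ((PMCF.C m (n + 2) : ℚ) : ℚ_[p])‖ ≤
        (p : ℝ) ^ (-(PMCF.K m n + (((n + 3) / 2 : ℕ) : ℤ))) :=
  pmcf_rate_of_convergence_general p m n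
end

section
/- Let (α, β) ∈ ℚ_p² with infinite p-adic MCF expansion, and set V_n^α = C_n α - A_n, V_n^β = C_n β - B_n. Then ν_p(V_n^α) ≥ ⌊(n+2)/2⌋ and ν_p(V_n^β) ≥ ⌊(n+3)/2⌋; in particular min{ν_p(V_n^α), ν_p(V_n^β)} ≥ ⌊n/2⌋ + 1. -/
namespace PMCF

variable {p : ℕ} [Fact (Nat.Prime p)]

def shift (m : PMCF p) : PMCF p where
  s := m.s
  s_int := m.s_int
  s_bound := m.s_bound
  s_close := m.s_close
  al n := m.al (n + 1)
  be n := m.be (n + 1)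
  ne n := m.ne (n + 1)
  ral n := m.ral (n + 1)
  rbe n := m.rbe (n + 1)

section Convergents

variable (m : PMCF p)

@[simp] lemma a_shift (n : ℕ) : a m.shift n = a m (n + 1) := rfl

@[simp] lemma b_shift (n : ℕ) : b m.shift n = b m (n + 1) := rfl

lemma A_add_three (n : ℕ) :
    A m (n + 3) = a m (n + 1) * A m (n + 2) + b m (n + 1) * A m (n + 1) + A m n := rfl

lemma B_add_three (n : ℕ) :
    B m (n + 3) = a m (n + 1) * B m (n + 2) + b m (n + 1) * B m (n + 1) + B m n := rfl

lemma C_add_three_s9 (n : ℕ) :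
    C m (n + 3) = a m (n + 1) * C m (n + 2) + b m (n + 1) * C m (n + 1) + C m n := rfl

lemma ABC_succ_eq_shift : ∀ n,
    A m (n + 1) = a m 0 * A m.shift n + B m.shift n ∧
    B m (n + 1) = b m 0 * A m.shift n + C m.shift n ∧
    C m (n + 1) = A m.shift n
  | 0 => by simp [A, B, C]
  | 1 => by simp [A, B, C]
  | 2 => by refine ⟨?_, ?_, ?_⟩ <;> simp only [A, B, C, a_shift, b_shift] <;> ring
  | k + 3 => by
    obtain ⟨hA₂, hB₂, hC₂⟩ := ABC_succ_eq_shift (k + 2)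
    obtain ⟨hA₁, hB₁, hC₁⟩ := ABC_succ_eq_shift (k + 1)
    obtain ⟨hA₀, hB₀, hC₀⟩ := ABC_succ_eq_shift k
    rw [A_add_three m (k + 1), B_add_three m (k + 1), C_add_three_s9 m (k + 1), A_add_three m.shift,
      B_add_three m.shift, C_add_three_s9 m.shift, hA₂, hB₂, hC₂, hA₁, hB₁, hC₁, hA₀, hB₀, hC₀]
    refine ⟨?_, ?_, rfl⟩ <;> simp only [a_shift, b_shift] <;> ring

lemma Va_zero : Va m 0 = m.al 0 - (a m 0 : ℚ_[p]) := by
  simp [Va, A, C]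

lemma Vb_zero : Vb m 0 = m.be 0 - (b m 0 : ℚ_[p]) := by
  simp [Vb, B, C]

lemma Va_succ (n : ℕ) :
    Va m (n + 1) = Vb m.shift n - (m.al 0 - (a m 0 : ℚ_[p])) * Va m.shift n := by
  obtain ⟨hA, -, hC⟩ := ABC_succ_eq_shift m (n + 2)
  have hal : m.shift.al 0 = (m.be 0 - (b m 0 : ℚ_[p]))⁻¹ := m.ral 0
  have hbe : m.shift.be 0 = (m.al 0 - (a m 0 : ℚ_[p])) * (m.be 0 - (b m 0 : ℚ_[p]))⁻¹ := m.rbe 0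
  have hne : m.be 0 - (b m 0 : ℚ_[p]) ≠ 0 := m.ne 0
  rw [Va, Va, Vb, hal, hbe, hA, hC]
  push_cast
  field_simp
  ring

lemma Vb_succ (n : ℕ) : Vb m (n + 1) = -(m.be 0 - (b m 0 : ℚ_[p])) * Va m.shift n := by
  obtain ⟨-, hB, hC⟩ := ABC_succ_eq_shift m (n + 2)
  have hal : m.shift.al 0 = (m.be 0 - (b m 0 : ℚ_[p]))⁻¹ := m.ral 0
  have hne : m.be 0 - (b m 0 : ℚ_[p]) ≠ 0 := m.ne 0
  rw [Vb, Va, hal, hB, hC]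
  push_cast
  field_simp
  ring

end Convergents

lemma one_le_cast_prime : (1 : ℝ) ≤ p := mod_cast (Fact.out : p.Prime).one_le

lemma norm_sub_s_le (m : PMCF p) (x : ℚ_[p]) : ‖x - (m.s x : ℚ_[p])‖ ≤ (p : ℝ) ^ (-1 : ℤ) := by
  rw [Padic.norm_le_pow_iff_norm_lt_pow_add_one]
  simpa using m.s_close x

lemma norm_al_sub_a_le (m : PMCF p) (n : ℕ) : ‖m.al n - (a m n : ℚ_[p])‖ ≤ (p : ℝ) ^ (-1 : ℤ) :=
  m.norm_sub_s_le _

lemma norm_be_sub_b_le (m : PMCF p) (n : ℕ) : ‖m.be n - (b m n : ℚ_[p])‖ ≤ (p : ℝ) ^ (-1 : ℤ) :=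
  m.norm_sub_s_le _

lemma _root_.Padic.norm_mul_le_zpow_sub_one {x y : ℚ_[p]} {k : ℤ}
    (hx : ‖x‖ ≤ (p : ℝ) ^ (-1 : ℤ)) (hy : ‖y‖ ≤ (p : ℝ) ^ k) :
    ‖x * y‖ ≤ (p : ℝ) ^ (k - 1) := by
  rw [norm_mul, sub_eq_neg_add, zpow_add₀ (mod_cast (Fact.out : p.Prime).ne_zero)]
  exact mul_le_mul hx hy (norm_nonneg _) (by positivity)

lemma norm_Va_Vb_le (n : ℕ) (m : PMCF p) :
    ‖Va m n‖ ≤ (p : ℝ) ^ (-(((n + 2) / 2 : ℕ) : ℤ)) ∧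
      ‖Vb m n‖ ≤ (p : ℝ) ^ (-(((n + 3) / 2 : ℕ) : ℤ)) := by
  induction n generalizing m with
  | zero => exact ⟨by simpa [Va_zero] using m.norm_al_sub_a_le 0,
      by simpa [Vb_zero] using m.norm_be_sub_b_le 0⟩
  | succ n ih =>
    obtain ⟨hVa, hVb⟩ := ih m.shift
    have hβVa := Padic.norm_mul_le_zpow_sub_one (m.norm_be_sub_b_le 0) hVa
    have hαVa := Padic.norm_mul_le_zpow_sub_one (m.norm_al_sub_a_le 0) hVa
    constructor
    · rw [Va_succ, sub_eq_add_neg]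
      refine (IsUltrametricDist.norm_add_le_max _ _).trans (max_le ?_ ?_)
      · exact hVb.trans (zpow_le_zpow_right₀ one_le_cast_prime (by omega))
      · rw [norm_neg]
        exact hαVa.trans (zpow_le_zpow_right₀ one_le_cast_prime (by omega))
    · rw [Vb_succ, neg_mul, norm_neg]
      exact hβVa.trans (zpow_le_zpow_right₀ one_le_cast_prime (by omega))

end PMCF

theorem pmcf_V_valuation_lower_bound_general (p : ℕ) [Fact (Nat.Prime p)]
    (m : PMCF p) (n : ℕ) :
    ‖PMCF.Va m n‖ ≤ (p : ℝ) ^ (-((((n + 2) / 2 : ℕ) : ℤ))) ∧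
      ‖PMCF.Vb m n‖ ≤ (p : ℝ) ^ (-((((n + 3) / 2 : ℕ) : ℤ))) ∧
      max ‖PMCF.Va m n‖ ‖PMCF.Vb m n‖ ≤ (p : ℝ) ^ (-(((n / 2 : ℕ) : ℤ) + 1)) := by
  obtain ⟨hVa, hVb⟩ := PMCF.norm_Va_Vb_le n m
  refine ⟨hVa, hVb, max_le ?_ ?_⟩
  · exact hVa.trans (zpow_le_zpow_right₀ PMCF.one_le_cast_prime (by omega))
  · exact hVb.trans (zpow_le_zpow_right₀ PMCF.one_le_cast_prime (by omega))

/-- `ν_p(V_n^α) ≥ ⌊(n+2)/2⌋`, `ν_p(V_n^β) ≥ ⌊(n+3)/2⌋`, and in particular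
`min{ν_p(V_n^α), ν_p(V_n^β)} ≥ ⌊n/2⌋ + 1` (stated via the `p`-adic norm). -/
theorem pmcf_V_valuation_lower_bound (p : ℕ) [Fact (Nat.Prime p)] (hp : Odd p)
    (m : PMCF p) (n : ℕ) :
    ‖PMCF.Va m n‖ ≤ (p : ℝ) ^ (-((((n + 2) / 2 : ℕ) : ℤ))) ∧
      ‖PMCF.Vb m n‖ ≤ (p : ℝ) ^ (-((((n + 3) / 2 : ℕ) : ℤ))) ∧
      max ‖PMCF.Va m n‖ ‖PMCF.Vb m n‖ ≤ (p : ℝ) ^ (-(((n / 2 : ℕ) : ℤ) + 1)) :=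
  pmcf_V_valuation_lower_bound_general p m n
end

section
/- For the p-adic MCF of (α, β), the identity (α - Q_{n-1}^α)(β - Q_{n-2}^β) - (β - Q_{n-1}^β)(α - Q_{n-2}^α) = 1/(C_{n-1} C_{n-2} (α_n C_{n-1} + β_n C_{n-2} + C_{n-3})) holds, where Q_k^α = A_k/C_k and Q_k^β = B_k/C_k. -/
theorem cross_error_eq_one_div_of_det_eq_one {K : Type*} [Field K]
    (u v x y a₀ a₁ a₂ b₀ b₁ b₂ c₀ c₁ c₂ : K) (hc₂ : c₂ ≠ 0) (hc₁ : c₁ ≠ 0)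
    (hL : x * c₂ + y * c₁ + c₀ ≠ 0)
    (hu : u * (x * c₂ + y * c₁ + c₀) = x * a₂ + y * a₁ + a₀)
    (hv : v * (x * c₂ + y * c₁ + c₀) = x * b₂ + y * b₁ + b₀)
    (hdet : a₂ * (b₁ * c₀ - b₀ * c₁) - b₂ * (a₁ * c₀ - a₀ * c₁) + c₂ * (a₁ * b₀ - a₀ * b₁) = 1) :
    (u - a₂ / c₂) * (v - b₁ / c₁) - (v - b₂ / c₂) * (u - a₁ / c₁) =
      1 / (c₂ * c₁ * (x * c₂ + y * c₁ + c₀)) := by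
  have key : ((u * c₂ - a₂) * (v * c₁ - b₁) - (v * c₂ - b₂) * (u * c₁ - a₁)) *
      (x * c₂ + y * c₁ + c₀) = 1 := by
    linear_combination (c₁ * b₂ - c₂ * b₁) * hu + (c₂ * a₁ - c₁ * a₂) * hv + hdet
  rw [eq_div_iff (mul_ne_zero (mul_ne_zero hc₂ hc₁) hL)]
  field_simp
  linear_combination key

namespace PMCF

variable {p : ℕ} [Fact (Nat.Prime p)]

theorem det_eq_one (m : PMCF p) (n : ℕ) :
    A m (n + 2) * (B m (n + 1) * C m n - B m n * C m (n + 1))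
      - B m (n + 2) * (A m (n + 1) * C m n - A m n * C m (n + 1))
      + C m (n + 2) * (A m (n + 1) * B m n - A m n * B m (n + 1)) = 1 := by
  induction n with
  | zero => simp [A, B, C]
  | succ k ih =>
    simp only [A, B, C]
    linear_combination ih

/-- The paper's `α_{N} X_{N-1} + β_{N} X_{N-2} + X_{N-3}` for `N = n + 1`. -/
noncomputable def completeForm (m : PMCF p) (X : ℕ → ℚ) (n : ℕ) : ℚ_[p] :=
  m.al (n + 1) * (X (n + 2) : ℚ_[p]) + m.be (n + 1) * (X (n + 1) : ℚ_[p]) + (X n : ℚ_[p])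

theorem completeForm_eq_mul_succ (m : PMCF p) (X : ℕ → ℚ)
    (hX : ∀ n, X (n + 3) = a m (n + 1) * X (n + 2) + b m (n + 1) * X (n + 1) + X n) (n : ℕ) :
    m.completeForm X n = (m.be (n + 1) - (b m (n + 1) : ℚ_[p])) * m.completeForm X (n + 1) := by
  have hd := m.ne (n + 1)
  simp only [completeForm, m.ral (n + 1), m.rbe (n + 1), hX, b, a]
  push_cast
  field_simp
  ring

theorem mul_completeForm_of_zero (m : PMCF p) (X Y : ℕ → ℚ)
    (hX : ∀ n, X (n + 3) = a m (n + 1) * X (n + 2) + b m (n + 1) * X (n + 1) + X n)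
    (hY : ∀ n, Y (n + 3) = a m (n + 1) * Y (n + 2) + b m (n + 1) * Y (n + 1) + Y n)
    (z : ℚ_[p]) (h₀ : z * m.completeForm Y 0 = m.completeForm X 0) (n : ℕ) :
    z * m.completeForm Y n = m.completeForm X n := by
  induction n with
  | zero => exact h₀
  | succ k ih =>
    have hd : m.be (k + 1) - (b m (k + 1) : ℚ_[p]) ≠ 0 := m.ne (k + 1)
    rw [completeForm_eq_mul_succ m X hX, completeForm_eq_mul_succ m Y hY, mul_left_comm] at ih
    exact mul_left_cancel₀ hd ih

theorem al_zero_mul_completeForm (m : PMCF p) (n : ℕ) :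
    m.al 0 * m.completeForm (C m) n = m.completeForm (A m) n := by
  refine mul_completeForm_of_zero m _ _ (fun _ => rfl) (fun _ => rfl) _ ?_ n
  have hd := m.ne 0
  simp only [completeForm, A, C, a, m.ral 0, m.rbe 0]
  push_cast
  field_simp
  ring

theorem be_zero_mul_completeForm (m : PMCF p) (n : ℕ) :
    m.be 0 * m.completeForm (C m) n = m.completeForm (B m) n := by
  refine mul_completeForm_of_zero m _ _ (fun _ => rfl) (fun _ => rfl) _ ?_ n
  have hd := m.ne 0
  simp only [completeForm, B, C, b, m.ral 0, m.rbe 0]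
  push_cast
  field_simp
  ring

end PMCF

theorem pmcf_difference_identity_general (p : ℕ) [Fact (Nat.Prime p)]
    (m : PMCF p) (n : ℕ)
    (h1 : ((PMCF.C m (n + 2) : ℚ) : ℚ_[p]) ≠ 0)
    (h2 : ((PMCF.C m (n + 1) : ℚ) : ℚ_[p]) ≠ 0)
    (h3 : m.al (n + 1) * ((PMCF.C m (n + 2) : ℚ) : ℚ_[p]) +
          m.be (n + 1) * ((PMCF.C m (n + 1) : ℚ) : ℚ_[p]) +
          ((PMCF.C m n : ℚ) : ℚ_[p]) ≠ 0) :
    (m.al 0 - ((PMCF.A m (n + 2) : ℚ) : ℚ_[p]) / ((PMCF.C m (n + 2) : ℚ) : ℚ_[p])) *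
        (m.be 0 - ((PMCF.B m (n + 1) : ℚ) : ℚ_[p]) / ((PMCF.C m (n + 1) : ℚ) : ℚ_[p])) -
      (m.be 0 - ((PMCF.B m (n + 2) : ℚ) : ℚ_[p]) / ((PMCF.C m (n + 2) : ℚ) : ℚ_[p])) *
        (m.al 0 - ((PMCF.A m (n + 1) : ℚ) : ℚ_[p]) / ((PMCF.C m (n + 1) : ℚ) : ℚ_[p])) =
      1 / (((PMCF.C m (n + 2) : ℚ) : ℚ_[p]) * ((PMCF.C m (n + 1) : ℚ) : ℚ_[p]) *
        (m.al (n + 1) * ((PMCF.C m (n + 2) : ℚ) : ℚ_[p]) +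
         m.be (n + 1) * ((PMCF.C m (n + 1) : ℚ) : ℚ_[p]) +
         ((PMCF.C m n : ℚ) : ℚ_[p]))) := by
  have hdet := congrArg (fun q : ℚ => (q : ℚ_[p])) (PMCF.det_eq_one m n)
  push_cast at hdet
  exact cross_error_eq_one_div_of_det_eq_one _ _ _ _ _ _ _ _ _ _ _ _ _ h1 h2 h3
    (PMCF.al_zero_mul_completeForm m n) (PMCF.be_zero_mul_completeForm m n) hdet

/-- The identity
`(α - Q_{N-1}^α)(β - Q_{N-2}^β) - (β - Q_{N-1}^β)(α - Q_{N-2}^α)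
  = 1/(C_{N-1} C_{N-2} (α_N C_{N-1} + β_N C_{N-2} + C_{N-3}))`,
stated here with `N = n + 1 ≥ 1`, assuming all appearing denominators are non-zero.
(Recall `C (k+2)` is the paper's `C_k`.) -/
theorem pmcf_difference_identity (p : ℕ) [Fact (Nat.Prime p)] (hp : Odd p)
    (m : PMCF p) (n : ℕ)
    (h1 : ((PMCF.C m (n + 2) : ℚ) : ℚ_[p]) ≠ 0)
    (h2 : ((PMCF.C m (n + 1) : ℚ) : ℚ_[p]) ≠ 0)
    (h3 : m.al (n + 1) * ((PMCF.C m (n + 2) : ℚ) : ℚ_[p]) +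
          m.be (n + 1) * ((PMCF.C m (n + 1) : ℚ) : ℚ_[p]) +
          ((PMCF.C m n : ℚ) : ℚ_[p]) ≠ 0) :
    (m.al 0 - ((PMCF.A m (n + 2) : ℚ) : ℚ_[p]) / ((PMCF.C m (n + 2) : ℚ) : ℚ_[p])) *
        (m.be 0 - ((PMCF.B m (n + 1) : ℚ) : ℚ_[p]) / ((PMCF.C m (n + 1) : ℚ) : ℚ_[p])) -
      (m.be 0 - ((PMCF.B m (n + 2) : ℚ) : ℚ_[p]) / ((PMCF.C m (n + 2) : ℚ) : ℚ_[p])) *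
        (m.al 0 - ((PMCF.A m (n + 1) : ℚ) : ℚ_[p]) / ((PMCF.C m (n + 1) : ℚ) : ℚ_[p])) =
      1 / (((PMCF.C m (n + 2) : ℚ) : ℚ_[p]) * ((PMCF.C m (n + 1) : ℚ) : ℚ_[p]) *
        (m.al (n + 1) * ((PMCF.C m (n + 2) : ℚ) : ℚ_[p]) +
         m.be (n + 1) * ((PMCF.C m (n + 1) : ℚ) : ℚ_[p]) +
         ((PMCF.C m n : ℚ) : ℚ_[p]))) :=
  pmcf_difference_identity_general p m n h1 h2 h3
end

section
/- For any function f: ℕ → ℕ there exist infinitely many pairs (α, β) ∈ ℚ_p² whose p-adic MCF expansion is infinite and satisfies min{ν_p(C_n α - A_n), ν_p(C_n β - B_n)} ≥ f(n) for every n. -/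
/-!
Choose exponents `u n ≥ 1` and look for complete quotients with `‖α n‖ = p ^ u n` and `b n = 0`,
i.e. `β n = 1 / α (n + 1)` and `α n = p ^ (-u n) + 1 / (α (n + 1) α (n + 2))`. Such `α` exist:
the finite truncations of this nested expression form a Cauchy sequence, because in an
ultrametric field `x ↦ 1 / (x y)` contracts on `‖x‖, ‖y‖ ≥ p`. Browkin's `s` is pinned down by its
three axioms, so it returns `a n = p ^ (-u n)` and `b n = 0`. The errors `W n = C_n α - A_n` then
satisfy `α (n + 1) W (n + 2) + W (n + 1) / α (n + 2) + W n = 0`, whence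
`‖W (n + 2)‖ ≤ p ^ (-u (n + 1))`; it remains to take `u` above `f` and to vary `u 0`.
-/

open Filter

section NestedInverse

variable {K : Type*} [NormedField K]

def nestedInv (c : ℕ → K) : ℕ → ℕ → K
  | 0 => c
  | d + 1 => fun n => c n + (nestedInv c d (n + 1) * nestedInv c d (n + 2))⁻¹

lemma nestedInv_succ (c : ℕ → K) (d n : ℕ) :
    nestedInv c (d + 1) n = c n + (nestedInv c d (n + 1) * nestedInv c d (n + 2))⁻¹ := rfl

variable [IsUltrametricDist K] {c : ℕ → K} {r : ℝ}

lemma norm_inv_mul_sub_inv_mul_le {X Y X' Y' : K} (hX : 1 ≤ ‖X‖) (hY : 1 ≤ ‖Y‖)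
    (hX' : ‖X'‖ = ‖X‖) (hY' : ‖Y'‖ = ‖Y‖) :
    ‖(X * Y)⁻¹ - (X' * Y')⁻¹‖ ≤ max ‖X - X'‖ ‖Y - Y'‖ / (‖X‖ * ‖Y‖) := by
  have hX0 : X ≠ 0 := norm_pos_iff.mp (by linarith)
  have hY0 : Y ≠ 0 := norm_pos_iff.mp (by linarith)
  have hX'0 : X' ≠ 0 := norm_pos_iff.mp (by rw [hX']; linarith)
  have hY'0 : Y' ≠ 0 := norm_pos_iff.mp (by rw [hY']; linarith)
  have hnum : ‖(X' - X) * Y' + X * (Y' - Y)‖ ≤ max ‖X - X'‖ ‖Y - Y'‖ * (‖X‖ * ‖Y‖) := by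
    refine (IsUltrametricDist.norm_add_le_max _ _).trans (max_le ?_ ?_)
    · rw [norm_mul, norm_sub_rev, hY']
      calc ‖X - X'‖ * ‖Y‖ ≤ max ‖X - X'‖ ‖Y - Y'‖ * ‖Y‖ := by gcongr; exact le_max_left _ _
        _ ≤ _ := by rw [mul_left_comm]; exact le_mul_of_one_le_left (by positivity) hX
    · rw [norm_mul, norm_sub_rev Y', mul_comm]
      calc ‖Y - Y'‖ * ‖X‖ ≤ max ‖X - X'‖ ‖Y - Y'‖ * ‖X‖ := by gcongr; exact le_max_right _ _
        _ ≤ _ := by rw [← mul_assoc]; exact le_mul_of_one_le_right (by positivity) hY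
  calc ‖(X * Y)⁻¹ - (X' * Y')⁻¹‖
      = ‖(X' - X) * Y' + X * (Y' - Y)‖ / ((‖X‖ * ‖Y‖) * (‖X‖ * ‖Y‖)) := by
        rw [show (X * Y)⁻¹ - (X' * Y')⁻¹ = ((X' - X) * Y' + X * (Y' - Y)) / ((X * Y) * (X' * Y'))
          by field_simp; ring, norm_div, norm_mul, norm_mul, norm_mul, hX', hY']
    _ ≤ max ‖X - X'‖ ‖Y - Y'‖ * (‖X‖ * ‖Y‖) / ((‖X‖ * ‖Y‖) * (‖X‖ * ‖Y‖)) := by gcongr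
    _ = max ‖X - X'‖ ‖Y - Y'‖ / (‖X‖ * ‖Y‖) := by field_simp

lemma norm_nestedInv (hr : 1 < r) (hc : ∀ n, r ≤ ‖c n‖) (d n : ℕ) :
    ‖nestedInv c d n‖ = ‖c n‖ := by
  induction d generalizing n with
  | zero => rfl
  | succ d ih =>
    have hsmall : ‖(nestedInv c d (n + 1) * nestedInv c d (n + 2))⁻¹‖ < ‖c n‖ := by
      rw [norm_inv, norm_mul, ih, ih]
      calc (‖c (n + 1)‖ * ‖c (n + 2)‖)⁻¹ < 1 :=
            inv_lt_one_of_one_lt₀ (one_lt_mul_of_lt_of_le (hr.trans_le (hc _))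
              (hr.le.trans (hc _)))
        _ < ‖c n‖ := hr.trans_le (hc n)
    rw [nestedInv_succ, IsUltrametricDist.norm_add_eq_max_of_norm_ne_norm hsmall.ne',
      max_eq_left hsmall.le]

lemma norm_nestedInv_succ_sub_le (hr : 1 < r) (hc : ∀ n, r ≤ ‖c n‖) (d n : ℕ) :
    ‖nestedInv c (d + 1) n - nestedInv c d n‖ ≤ r⁻¹ ^ (d + 1) := by
  have hr0 : 0 < r := one_pos.trans hr
  induction d generalizing n with
  | zero =>
    simp only [nestedInv, add_sub_cancel_left, norm_inv, norm_mul, zero_add, pow_one]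
    exact inv_anti₀ hr0 (by nlinarith [hc (n + 1), hc (n + 2)])
  | succ d ih =>
    have hnorm := norm_nestedInv hr hc
    have hone (e k : ℕ) : 1 ≤ ‖nestedInv c e k‖ := by rw [hnorm]; linarith [hc k]
    rw [nestedInv_succ c (d + 1) n, nestedInv_succ c d n, add_sub_add_left_eq_sub]
    calc _ ≤ max ‖nestedInv c (d + 1) (n + 1) - nestedInv c d (n + 1)‖
            ‖nestedInv c (d + 1) (n + 2) - nestedInv c d (n + 2)‖ /
            (‖nestedInv c (d + 1) (n + 1)‖ * ‖nestedInv c (d + 1) (n + 2)‖) :=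
          norm_inv_mul_sub_inv_mul_le (hone _ _) (hone _ _) (by rw [hnorm, hnorm])
            (by rw [hnorm, hnorm])
      _ ≤ r⁻¹ ^ (d + 1) / r := by
          rw [hnorm, hnorm]
          gcongr
          · exact max_le (ih _) (ih _)
          · nlinarith [hc (n + 1), hc (n + 2)]
      _ = r⁻¹ ^ (d + 1 + 1) := by rw [div_eq_mul_inv, ← pow_succ]

theorem exists_eq_add_inv_mul [CompleteSpace K] (hr : 1 < r) (hc : ∀ n, r ≤ ‖c n‖) :
    ∃ α : ℕ → K, (∀ n, ‖α n‖ = ‖c n‖) ∧ ∀ n, α n = c n + (α (n + 1) * α (n + 2))⁻¹ := by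
  have hcauchy (n : ℕ) : CauchySeq (nestedInv c · n) := by
    refine cauchySeq_of_le_geometric r⁻¹ r⁻¹ (inv_lt_one_of_one_lt₀ hr) fun d => ?_
    rw [dist_comm, dist_eq_norm, ← pow_succ']
    exact norm_nestedInv_succ_sub_le hr hc d n
  choose α hα using fun n => cauchySeq_tendsto_of_complete (hcauchy n)
  have hnorm (n : ℕ) : ‖α n‖ = ‖c n‖ :=
    tendsto_nhds_unique (hα n).norm (by simp only [norm_nestedInv hr hc]; exact tendsto_const_nhds)
  have hne (n : ℕ) : α n ≠ 0 := norm_pos_iff.mp (by rw [hnorm]; linarith [hc n])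
  refine ⟨α, hnorm, fun n => tendsto_nhds_unique ((hα n).comp (tendsto_add_atTop_nat 1)) ?_⟩
  exact tendsto_const_nhds.add
    (((hα (n + 1)).mul (hα (n + 2))).inv₀ (mul_ne_zero (hne _) (hne _)))

end NestedInverse

section ErrorRecurrence

variable {K : Type*} [Field K]

/-- The convergent recurrence (with `b = 0`) rewritten through the complete quotients `α`:
its coefficients become inverses of the `α`, which is what makes the errors small. -/
lemma mul_add_inv_mul_add_eq_zero {α a W : ℕ → K} (hα : ∀ n, α n ≠ 0)
    (ha : ∀ n, a n = α n - (α (n + 1) * α (n + 2))⁻¹)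
    (hW : ∀ n, W (n + 3) = a (n + 1) * W (n + 2) + W n)
    (h₀ : α 1 * W 2 + (α 2)⁻¹ * W 1 + W 0 = 0) (n : ℕ) :
    α (n + 1) * W (n + 2) + (α (n + 2))⁻¹ * W (n + 1) + W n = 0 := by
  induction n with
  | zero => exact h₀
  | succ n ih =>
    show α (n + 2) * W (n + 3) + (α (n + 3))⁻¹ * W (n + 2) + W (n + 1) = 0
    rw [hW, ha, show n + 1 + 1 = n + 2 from rfl, show n + 1 + 2 = n + 3 from rfl]
    linear_combination α (n + 2) * ih
      - ((α (n + 3))⁻¹ * W (n + 2) + W (n + 1)) * mul_inv_cancel₀ (hα (n + 2))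

end ErrorRecurrence

section ErrorBound

variable {K : Type*} [NormedField K] [IsUltrametricDist K]

lemma norm_le_inv_norm_of_mul_add_inv_mul_add_eq_zero {α W : ℕ → K} (hα : ∀ n, 1 ≤ ‖α n‖)
    (hW : ∀ n, α (n + 1) * W (n + 2) + (α (n + 2))⁻¹ * W (n + 1) + W n = 0)
    (h₀ : ‖W 0‖ ≤ 1) (h₁ : ‖W 1‖ ≤ 1) (n : ℕ) :
    ‖W (n + 2)‖ ≤ ‖α (n + 1)‖⁻¹ := by
  have hstep (n : ℕ) : ‖W (n + 2)‖ ≤ ‖α (n + 1)‖⁻¹ * max ‖W (n + 1)‖ ‖W n‖ := by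
    have hα0 : α (n + 1) ≠ 0 := norm_pos_iff.mp (by linarith [hα (n + 1)])
    have hWeq : W (n + 2) = -(α (n + 1))⁻¹ * ((α (n + 2))⁻¹ * W (n + 1) + W n) := by
      field_simp
      linear_combination hW n
    rw [hWeq, norm_mul, norm_neg, norm_inv]
    gcongr
    refine (IsUltrametricDist.norm_add_le_max _ _).trans (max_le_max ?_ le_rfl)
    rw [norm_mul, norm_inv]
    exact mul_le_of_le_one_left (norm_nonneg _) (inv_le_one_of_one_le₀ (hα _))
  have hle_one (n : ℕ) : ‖W n‖ ≤ 1 := by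
    induction n using Nat.twoStepInduction with
    | zero => exact h₀
    | one => exact h₁
    | more n ih₀ ih₁ =>
      exact (hstep n).trans (mul_le_one₀ (inv_le_one_of_one_le₀ (hα _)) (by positivity)
        (max_le ih₁ ih₀))
  exact (hstep n).trans (mul_le_of_le_one_right (by positivity) (max_le (hle_one _) (hle_one _)))

end ErrorBound

section Browkin

variable {p : ℕ} [Fact p.Prime]

def IsBrowkinApprox (x : ℚ_[p]) (r : ℚ) : Prop :=
  (∃ (z : ℤ) (k : ℕ), r = (z : ℚ) / (p : ℚ) ^ k) ∧ |r| < (p : ℚ) / 2 ∧ ‖x - (r : ℚ_[p])‖ < 1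

lemma eq_zero_of_norm_div_pow_lt_one {w : ℤ} {k : ℕ}
    (hnorm : ‖(((w : ℚ) / (p : ℚ) ^ k : ℚ) : ℚ_[p])‖ < 1) (habs : |(w : ℚ) / (p : ℚ) ^ k| < p) :
    w = 0 := by
  have hp0 : (0 : ℚ) < (p : ℚ) ^ k := pow_pos (Nat.cast_pos.mpr (Fact.out : p.Prime).pos) k
  have hdvd : (p : ℤ) ^ (k + 1) ∣ w := by
    rw [← Padic.norm_int_le_pow_iff_dvd, Nat.cast_succ, neg_add, ← sub_eq_add_neg,
      ← Padic.norm_lt_pow_iff_norm_le_pow_sub_one]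
    have hw : ((w : ℚ) : ℚ_[p]) = (((w : ℚ) / (p : ℚ) ^ k : ℚ) : ℚ_[p]) * (p : ℚ_[p]) ^ k := by
      have : (p : ℚ_[p]) ≠ 0 := by exact_mod_cast (Fact.out : p.Prime).ne_zero
      push_cast
      field_simp
    rw [← Rat.cast_intCast, hw, norm_mul, Padic.norm_p_pow]
    exact mul_lt_of_lt_one_left (zpow_pos (Nat.cast_pos.mpr (Fact.out : p.Prime).pos) _) hnorm
  refine Int.eq_zero_of_abs_lt_dvd hdvd ?_
  rw [abs_div, abs_of_pos hp0, div_lt_iff₀ hp0, ← pow_succ'] at habs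
  exact_mod_cast habs

lemma IsBrowkinApprox.unique {x : ℚ_[p]} {r r' : ℚ} (h : IsBrowkinApprox x r)
    (h' : IsBrowkinApprox x r') : r = r' := by
  obtain ⟨⟨z, k, rfl⟩, hb, hx⟩ := h
  obtain ⟨⟨z', k', rfl⟩, hb', hx'⟩ := h'
  have hrepr : (z : ℚ) / (p : ℚ) ^ k - (z' : ℚ) / (p : ℚ) ^ k'
      = ((z * (p : ℤ) ^ k' - z' * (p : ℤ) ^ k : ℤ) : ℚ) / (p : ℚ) ^ (k + k') := by
    have : (p : ℚ) ≠ 0 := by exact_mod_cast (Fact.out : p.Prime).ne_zero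
    push_cast
    field_simp
    ring
  have key : z * (p : ℤ) ^ k' - z' * (p : ℤ) ^ k = 0 := by
    refine eq_zero_of_norm_div_pow_lt_one (p := p) (k := k + k') ?_ ?_ <;> rw [← hrepr]
    · rw [Rat.cast_sub, ← dist_eq_norm]
      refine (IsUltrametricDist.dist_triangle_max _ x _).trans_lt (max_lt ?_ ?_)
      · rwa [dist_comm, dist_eq_norm]
      · rwa [dist_eq_norm]
    · calc _ ≤ |(z : ℚ) / (p : ℚ) ^ k| + |(z' : ℚ) / (p : ℚ) ^ k'| := abs_sub _ _
        _ < (p : ℚ) / 2 + (p : ℚ) / 2 := add_lt_add hb hb'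
        _ = p := by ring
  rw [← sub_eq_zero, hrepr, key, Int.cast_zero, zero_div]

lemma exists_int_two_mul_abs_lt_norm_sub_le (hp : Odd p) (y : ℤ_[p]) (n : ℕ) :
    ∃ w : ℤ, 2 * |w| < (p : ℤ) ^ n ∧ ‖(y : ℚ_[p]) - w‖ ≤ (p : ℝ) ^ (-(n : ℤ)) := by
  set N : ℕ := y.appr n
  have hpn : 0 < p ^ n := pow_pos (Fact.out : p.Prime).pos n
  obtain ⟨M, hM⟩ := hp.pow (n := n)
  have hpow : ((p ^ n : ℕ) : ℤ) = 2 * M + 1 := by exact_mod_cast hM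
  set w := Int.bmod N (p ^ n)
  -- `p ^ n` is odd, so the balanced residue `w` satisfies `|w| ≤ (p ^ n - 1) / 2`.
  have hlo : -(((p ^ n : ℕ) : ℤ) / 2) ≤ w := Int.le_bmod hpn
  have hhi : w ≤ (((p ^ n : ℕ) : ℤ) - 1) / 2 := Int.bmod_le hpn
  rw [hpow] at hlo hhi
  refine ⟨w, ?_, ?_⟩
  · have habs : |w| ≤ M := abs_le.mpr ⟨by omega, by omega⟩
    push_cast at hpow
    linarith
  · have happr : ‖(y : ℚ_[p]) - N‖ ≤ (p : ℝ) ^ (-(n : ℤ)) := by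
      have := (PadicInt.norm_le_pow_iff_mem_span_pow _ n).mpr (PadicInt.appr_spec n y)
      rwa [PadicInt.norm_def, PadicInt.coe_sub, PadicInt.coe_natCast] at this
    have hmod : ‖((N : ℤ) : ℚ_[p]) - w‖ ≤ (p : ℝ) ^ (-(n : ℤ)) := by
      rw [← Int.cast_sub, Padic.norm_int_le_pow_iff_dvd, ← dvd_neg, neg_sub]
      exact_mod_cast Int.dvd_bmod_sub_self
    calc ‖(y : ℚ_[p]) - w‖ = ‖((y : ℚ_[p]) - N) + (((N : ℤ) : ℚ_[p]) - w)‖ := by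
          push_cast; ring_nf
      _ ≤ _ := (IsUltrametricDist.norm_add_le_max _ _).trans (max_le happr hmod)

lemma exists_isBrowkinApprox (hp : Odd p) (x : ℚ_[p]) : ∃ r, IsBrowkinApprox x r := by
  have hp1 : (1 : ℝ) < p := mod_cast (Fact.out : p.Prime).one_lt
  have hp0 : (p : ℚ_[p]) ≠ 0 := by exact_mod_cast (Fact.out : p.Prime).ne_zero
  obtain ⟨k, hk⟩ := pow_unbounded_of_one_lt ‖x‖ hp1
  have hy : ‖x * (p : ℚ_[p]) ^ k‖ ≤ 1 := by
    rw [norm_mul, Padic.norm_p_pow, zpow_neg, zpow_natCast, ← div_eq_mul_inv,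
      div_le_one (by positivity)]
    exact hk.le
  obtain ⟨w, hwabs, hwnorm⟩ := exists_int_two_mul_abs_lt_norm_sub_le hp ⟨_, hy⟩ (k + 1)
  refine ⟨w / (p : ℚ) ^ k, ⟨w, k, rfl⟩, ?_, ?_⟩
  · have hpk : (0 : ℚ) < (p : ℚ) ^ k := pow_pos (Nat.cast_pos.mpr (Fact.out : p.Prime).pos) k
    have : 2 * |(w : ℚ)| < (p : ℚ) ^ (k + 1) := by exact_mod_cast hwabs
    rw [abs_div, abs_of_pos hpk, div_lt_div_iff₀ hpk two_pos]
    linarith [pow_succ' (p : ℚ) k]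
  · have hsplit : x - ((w / (p : ℚ) ^ k : ℚ) : ℚ_[p]) =
        (x * (p : ℚ_[p]) ^ k - w) / (p : ℚ_[p]) ^ k := by
      push_cast
      field_simp
    rw [hsplit, norm_div, Padic.norm_p_pow, div_lt_one (zpow_pos (by positivity) _)]
    calc _ ≤ (p : ℝ) ^ (-((k + 1 : ℕ) : ℤ)) := hwnorm
      _ < (p : ℝ) ^ (-(k : ℤ)) := zpow_lt_zpow_right₀ hp1 (by omega)

namespace BrowkinS

noncomputable def ofOdd (hp : Odd p) : BrowkinS p where
  s x := (exists_isBrowkinApprox hp x).choose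
  s_int x := (exists_isBrowkinApprox hp x).choose_spec.1
  s_bound x := (exists_isBrowkinApprox hp x).choose_spec.2.1
  s_close x := (exists_isBrowkinApprox hp x).choose_spec.2.2

lemma s_eq (S : BrowkinS p) {x : ℚ_[p]} {r : ℚ} (h : IsBrowkinApprox x r) : S.s x = r :=
  IsBrowkinApprox.unique ⟨S.s_int x, S.s_bound x, S.s_close x⟩ h

end BrowkinS

end Browkin

namespace PMCF

variable {p : ℕ} [Fact p.Prime]

lemma C_mul_sub_A_add_three (m : PMCF p) (x : ℚ_[p]) (k : ℕ) :
    (C m (k + 3) : ℚ_[p]) * x - A m (k + 3) =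
      a m (k + 1) * ((C m (k + 2) : ℚ_[p]) * x - A m (k + 2)) +
      b m (k + 1) * ((C m (k + 1) : ℚ_[p]) * x - A m (k + 1)) + ((C m k : ℚ_[p]) * x - A m k) := by
  simp only [C, A]
  push_cast
  ring

lemma C_mul_sub_B_add_three (m : PMCF p) (x : ℚ_[p]) (k : ℕ) :
    (C m (k + 3) : ℚ_[p]) * x - B m (k + 3) =
      a m (k + 1) * ((C m (k + 2) : ℚ_[p]) * x - B m (k + 2)) +
      b m (k + 1) * ((C m (k + 1) : ℚ_[p]) * x - B m (k + 1)) + ((C m k : ℚ_[p]) * x - B m k) := by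
  simp only [C, B]
  push_cast
  ring

section CompleteQuotients

variable (S : BrowkinS p) {α : ℕ → ℚ_[p]} (hα : ∀ n, α n ≠ 0) (hs : ∀ n, S.s (α (n + 1))⁻¹ = 0)
  (hrec : ∀ n, α n - S.s (α n) = (α (n + 1) * α (n + 2))⁻¹)

/-- Taking `β n = 1 / α (n + 1)` makes every `b n` vanish, and the Jacobi–Perron step then
reduces to `α n = a n + 1 / (α (n + 1) α (n + 2))`. -/
noncomputable def ofCompleteQuotients : PMCF p where
  s := S.s
  s_int := S.s_int
  s_bound := S.s_bound
  s_close := S.s_close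
  al := α
  be n := (α (n + 1))⁻¹
  ne n := by rw [hs, Rat.cast_zero, sub_zero]; exact inv_ne_zero (hα _)
  ral n := by rw [hs, Rat.cast_zero, sub_zero, inv_inv]
  rbe n := by
    rw [hs, Rat.cast_zero, sub_zero, inv_inv, hrec, mul_inv, mul_comm, ← mul_assoc,
      mul_inv_cancel₀ (hα _), one_mul]

lemma ofCompleteQuotients_b (n : ℕ) : b (ofCompleteQuotients S hα hs hrec) n = 0 := hs n

lemma ofCompleteQuotients_a (n : ℕ) :
    (a (ofCompleteQuotients S hα hs hrec) n : ℚ_[p]) = α n - (α (n + 1) * α (n + 2))⁻¹ := by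
  rw [← hrec, sub_sub_cancel]
  rfl

theorem max_norm_Va_norm_Vb_ofCompleteQuotients_le (hα₁ : ∀ n, 1 ≤ ‖α n‖) (n : ℕ) :
    max ‖Va (ofCompleteQuotients S hα hs hrec) n‖ ‖Vb (ofCompleteQuotients S hα hs hrec) n‖ ≤
      ‖α (n + 1)‖⁻¹ := by
  have ha := ofCompleteQuotients_a S hα hs hrec
  have hb := ofCompleteQuotients_b S hα hs hrec
  set m := ofCompleteQuotients S hα hs hrec
  have hbound (W : ℕ → ℚ_[p]) (hW : ∀ k, W (k + 3) = (a m (k + 1) : ℚ_[p]) * W (k + 2) + W k)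
      (h₀ : α 1 * W 2 + (α 2)⁻¹ * W 1 + W 0 = 0) (h0 : ‖W 0‖ ≤ 1) (h1 : ‖W 1‖ ≤ 1) :
      ‖W (n + 2)‖ ≤ ‖α (n + 1)‖⁻¹ :=
    norm_le_inv_norm_of_mul_add_inv_mul_add_eq_zero hα₁ (mul_add_inv_mul_add_eq_zero hα ha hW h₀)
      h0 h1 n
  refine max_le (hbound (fun k => (C m k : ℚ_[p]) * α 0 - A m k) (fun k => ?_) ?_ ?_ ?_)
    (hbound (fun k => (C m k : ℚ_[p]) * (α 1)⁻¹ - B m k) (fun k => ?_) ?_ ?_ ?_)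
  · rw [C_mul_sub_A_add_three, hb, Rat.cast_zero, zero_mul, add_zero]
  · simp only [C, A]
    push_cast
    rw [ha 0]
    field_simp [hα 1]
    ring
  · simp [C, A]
  · simp [C, A]
  · rw [C_mul_sub_B_add_three, hb, Rat.cast_zero, zero_mul, add_zero]
  · simp only [C, B, hb]
    push_cast
    field_simp [hα 1]
    ring
  · simp [C, B]
  · simp [C, B]

end CompleteQuotients

theorem exists_norm_al_zero_eq_and_max_norm_Va_Vb_le (hp : Odd p) (u : ℕ → ℕ) (hu : ∀ n, 1 ≤ u n) :
    ∃ m : PMCF p, ‖m.al 0‖ = (p : ℝ) ^ (u 0 : ℤ) ∧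
      ∀ n, max ‖Va m n‖ ‖Vb m n‖ ≤ (p : ℝ) ^ (-(u (n + 1) : ℤ)) := by
  have hp1 : (1 : ℝ) < p := mod_cast (Fact.out : p.Prime).one_lt
  have hp3 : (3 : ℚ) ≤ p := by
    obtain ⟨k, rfl⟩ := hp
    have := (Fact.out : (2 * k + 1).Prime).two_le
    exact_mod_cast (by omega : 3 ≤ 2 * k + 1)
  set c : ℕ → ℚ_[p] := fun n => (((p : ℚ) ^ u n)⁻¹ : ℚ)
  have hc (n : ℕ) : ‖c n‖ = (p : ℝ) ^ (u n : ℤ) := by simp [c]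
  have hcp (n : ℕ) : (p : ℝ) ≤ ‖c n‖ := by
    rw [hc, zpow_natCast]
    exact le_self_pow₀ hp1.le (Nat.one_le_iff_ne_zero.mp (hu n))
  obtain ⟨α, hαc, hαrec⟩ := exists_eq_add_inv_mul hp1 hcp
  have hα₁ (n : ℕ) : 1 ≤ ‖α n‖ := by linarith [hαc n, hcp n]
  have hα (n : ℕ) : α n ≠ 0 := norm_pos_iff.mp (by linarith [hα₁ n])
  have hinv (n : ℕ) : ‖(α n)⁻¹‖ < 1 := by
    rw [norm_inv]
    exact inv_lt_one_of_one_lt₀ (hp1.trans_le ((hcp n).trans (hαc n).ge))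
  let S := BrowkinS.ofOdd hp
  have hsα (n : ℕ) : S.s (α n) = ((p : ℚ) ^ u n)⁻¹ := by
    refine S.s_eq ⟨⟨1, u n, by rw [Int.cast_one, one_div]⟩, ?_, ?_⟩
    · rw [abs_inv, abs_pow, Nat.abs_cast]
      have : ((p : ℚ) ^ u n)⁻¹ ≤ 1 := inv_le_one_of_one_le₀ (one_le_pow₀ (by linarith))
      linarith
    · rw [show α n - c n = (α (n + 1) * α (n + 2))⁻¹ by rw [hαrec n]; ring, mul_inv, norm_mul]
      exact mul_lt_one_of_nonneg_of_lt_one_left (norm_nonneg _) (hinv _) (hinv _).le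
  have hsβ (n : ℕ) : S.s (α (n + 1))⁻¹ = 0 :=
    S.s_eq ⟨⟨0, 0, by simp⟩, by rw [abs_zero]; linarith, by simpa using hinv (n + 1)⟩
  have hrec (n : ℕ) : α n - S.s (α n) = (α (n + 1) * α (n + 2))⁻¹ := by
    rw [hsα, hαrec n]
    ring
  refine ⟨ofCompleteQuotients S hα hsβ hrec, (hαc 0).trans (hc 0), fun n => ?_⟩
  refine (max_norm_Va_norm_Vb_ofCompleteQuotients_le S hα hsβ hrec hα₁ n).trans_eq ?_
  rw [hαc, hc, zpow_neg]

end PMCF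

/-- For any `f : ℕ → ℕ` there are infinitely many pairs `(α, β) ∈ ℚ_p²` with infinite
`p`-adic MCF expansion satisfying `min{ν_p(C_n α - A_n), ν_p(C_n β - B_n)} ≥ f(n)`
for every `n` (stated via the norm). -/
theorem pmcf_infinitely_many_good_pairs (p : ℕ) [Fact (Nat.Prime p)] (hp : Odd p)
    (f : ℕ → ℕ) :
    {q : ℚ_[p] × ℚ_[p] | ∃ m : PMCF p, m.al 0 = q.1 ∧ m.be 0 = q.2 ∧
      ∀ n, max ‖PMCF.Va m n‖ ‖PMCF.Vb m n‖ ≤ (p : ℝ) ^ (-((f n : ℤ)))}.Infinite := by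
  have hp1 : (1 : ℝ) < p := mod_cast (Fact.out : p.Prime).one_lt
  -- `u (n + 1) = j + 1 + f n` controls the `n`-th error, while `u 0` tells the pairs apart.
  choose m hm₀ hmV using fun j : ℕ =>
    PMCF.exists_norm_al_zero_eq_and_max_norm_Va_Vb_le hp (fun n => j + 1 + f (n - 1)) (fun n => by omega)
  refine Set.infinite_of_injective_forall_mem (f := fun j => ((m j).al 0, (m j).be 0))
    (fun i j hij => ?_) (fun j => ⟨m j, rfl, rfl, fun n => (hmV j n).trans ?_⟩)
  · have := congrArg (fun q => ‖q.1‖) hij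
    simp only [hm₀] at this
    have := zpow_right_injective₀ (one_pos.trans hp1) hp1.ne' this
    omega
  · exact zpow_le_zpow_right₀ hp1.le (by simp)
end

section
/- Let (α, β) ∈ ℚ_p² have a p-adic MCF expansion of length ≥ n, and let (α', β') ∈ ℚ_p². If max{|α - α'|_p, |β - β'|_p} < p^{-2K_n}, then the MCF of (α', β') has length ≥ n and a_i = a_i', b_i = b_i' for i = 0, …, n. -/
/-! `s` is constant on open unit discs, since two of its values differ by an element of
`ℤ[1/p]` that is `< p` in absolute value and `< 1` in `p`-adic norm. Hence a Jacobi–Perron step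
`(α, β) ↦ (1/(β - s β), (α - s α)/(β - s β))` applied to two pairs at distance `δ < |β - s β|_p`
uses the same partial quotients, and by the ultrametric inequality the new pairs are at distance
at most `δ / |β - s β|_p² = δ |a₁|_p²`. Starting at distance `< p^{-2K_n} = ∏_{i ≤ n} |a_i|_p^{-2}`,
the two expansions therefore stay closer than `|β_k - b_k|_p` for the first `n` steps. -/

section Ultrametric

variable {K : Type*} [NormedField K] [IsUltrametricDist K]

lemma norm_eq_of_norm_sub_lt {v v' : K} (h : ‖v - v'‖ < ‖v‖) : ‖v'‖ = ‖v‖ := by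
  simpa [norm_sub_rev v', h.ne, h.le] using
    IsUltrametricDist.norm_sub_eq_max_of_norm_sub_ne_norm_sub v' v 0
      (by rw [norm_sub_rev, sub_zero]; exact h.ne)

lemma norm_mul_inv_sub_mul_inv_le {u u' v v' : K} {δ : ℝ} (hu : ‖u‖ ≤ 1) (hv : ‖v‖ ≤ 1)
    (huδ : ‖u - u'‖ ≤ δ) (hvδ : ‖v - v'‖ ≤ δ) (hδ : δ < ‖v‖) :
    ‖u * v⁻¹ - u' * v'⁻¹‖ ≤ δ / ‖v‖ ^ 2 := by
  have hv' : ‖v'‖ = ‖v‖ := norm_eq_of_norm_sub_lt (hvδ.trans_lt hδ)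
  have hv0 : v ≠ 0 := norm_pos_iff.mp ((norm_nonneg _).trans_lt (hvδ.trans_lt hδ))
  have hv'0 : v' ≠ 0 := norm_pos_iff.mp (hv' ▸ norm_pos_iff.mpr hv0)
  have hδ0 : 0 ≤ δ := (norm_nonneg _).trans huδ
  have key : u * v⁻¹ - u' * v'⁻¹ = (u * (v' - v) + (u - u') * v) / (v * v') := by
    field_simp; ring
  rw [key, norm_div, norm_mul, hv', ← sq]
  gcongr
  refine (IsUltrametricDist.norm_add_le_max _ _).trans (max_le ?_ ?_) <;> rw [norm_mul]
  · rw [norm_sub_rev]; nlinarith [norm_nonneg u, norm_nonneg (v - v')]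
  · nlinarith [norm_nonneg v, norm_nonneg (u - u')]

end Ultrametric

section Padic

variable {p : ℕ} [Fact p.Prime]

theorem Rat.eq_zero_of_abs_lt_of_norm_lt_one {q : ℚ} (hq : ∃ (z : ℤ) (k : ℕ), q = z / p ^ k)
    (hb : |q| < p) (hn : ‖(q : ℚ_[p])‖ < 1) : q = 0 := by
  obtain ⟨z, k, rfl⟩ := hq
  have hp : (0 : ℚ) < p := mod_cast (Fact.out : p.Prime).pos
  have hz : ‖(z : ℚ_[p])‖ < (p : ℝ) ^ (-k : ℤ) := by
    have : (z : ℚ_[p]) = ((z / p ^ k : ℚ) : ℚ_[p]) * (p : ℚ_[p]) ^ k := by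
      have : (p : ℚ_[p]) ≠ 0 := mod_cast hp.ne'
      push_cast; field_simp
    rw [this, norm_mul, Padic.norm_p_pow]
    exact mul_lt_of_lt_one_left (zpow_pos (mod_cast hp) _) hn
  have hdvd : (p ^ (k + 1) : ℤ) ∣ z := by
    rwa [Padic.norm_lt_pow_iff_norm_le_pow_sub_one, show (-k : ℤ) - 1 = -((k + 1 : ℕ) : ℤ) by
      push_cast; ring, Padic.norm_int_le_pow_iff_dvd] at hz
  by_contra hq0
  have hz0 : z ≠ 0 := by rintro rfl; simp at hq0
  have hpow : ((p ^ (k + 1) : ℤ) : ℚ) ≤ |(z : ℚ)| :=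
    mod_cast Int.le_of_dvd (abs_pos.mpr hz0) ((dvd_abs _ _).mpr hdvd)
  rw [abs_div, abs_of_pos (pow_pos hp k), div_lt_iff₀ (pow_pos hp k)] at hb
  push_cast at hpow
  linarith [pow_succ (p : ℚ) k]

namespace BrowkinS

variable (S : BrowkinS p)

theorem s_eq_of_norm_sub_lt_one {x y : ℚ_[p]} (h : ‖x - y‖ < 1) : S.s x = S.s y := by
  have hd : ‖((S.s x - S.s y : ℚ) : ℚ_[p])‖ < 1 := by
    have : ((S.s x - S.s y : ℚ) : ℚ_[p]) =
        ((S.s x : ℚ_[p]) - x + (x - y)) + (y - (S.s y : ℚ_[p])) := by push_cast; ring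
    rw [this]
    refine (IsUltrametricDist.norm_add_le_max _ _).trans_lt (max_lt
      ((IsUltrametricDist.norm_add_le_max _ _).trans_lt (max_lt ?_ h)) (S.s_close y))
    rw [norm_sub_rev]; exact S.s_close x
  have hb : |S.s x - S.s y| < p := by
    linarith [abs_sub (S.s x) (S.s y), S.s_bound x, S.s_bound y]
  obtain ⟨z₁, k₁, h₁⟩ := S.s_int x
  obtain ⟨z₂, k₂, h₂⟩ := S.s_int y
  have hp : (p : ℚ) ≠ 0 := mod_cast (Fact.out : p.Prime).ne_zero
  have hint : ∃ (z : ℤ) (k : ℕ), S.s x - S.s y = z / p ^ k :=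
    ⟨z₁ * p ^ k₂ - z₂ * p ^ k₁, k₁ + k₂, by rw [h₁, h₂]; field_simp; push_cast; ring⟩
  exact sub_eq_zero.mp (Rat.eq_zero_of_abs_lt_of_norm_lt_one hint hb hd)

theorem norm_s_eq (x : ℚ_[p]) (hx : 1 < ‖x‖) : ‖(S.s x : ℚ_[p])‖ = ‖x‖ :=
  (Padic.norm_eq_of_norm_sub_lt_left ((S.s_close x).trans hx)).symm

theorem norm_eq_zpow_padicValRat_s_inv {v : ℚ_[p]} (hv0 : v ≠ 0) (hv : ‖v‖ < 1) :
    ‖v‖ = (p : ℝ) ^ padicValRat p (S.s v⁻¹) := by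
  have hinv : 1 < ‖v⁻¹‖ := by
    rw [norm_inv]; exact (one_lt_inv₀ (norm_pos_iff.mpr hv0)).mpr hv
  have hs := S.norm_s_eq _ hinv
  have hs0 : S.s v⁻¹ ≠ 0 := by
    rintro h; rw [h, Rat.cast_zero, norm_zero] at hs; linarith
  rw [Padic.eq_padicNorm, padicNorm.eq_zpow_of_nonzero hs0, norm_inv] at hs
  push_cast at hs
  rw [← inv_inv ‖v‖, ← hs, zpow_neg, inv_inv]

theorem padicValRat_s_inv_neg {v : ℚ_[p]} (hv0 : v ≠ 0) (hv : ‖v‖ < 1) :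
    padicValRat p (S.s v⁻¹) < 0 := by
  rw [S.norm_eq_zpow_padicValRat_s_inv hv0 hv] at hv
  exact (zpow_lt_one_iff_right₀ (mod_cast (Fact.out : p.Prime).one_lt)).mp hv

theorem jacobiPerron_step {x y x' y' : ℚ_[p]} {δ : ℝ} (hxy : max ‖x - x'‖ ‖y - y'‖ ≤ δ)
    (hδ : δ < ‖y - S.s y‖) :
    S.s x = S.s x' ∧ S.s y = S.s y' ∧ y' - S.s y' ≠ 0 ∧
      max ‖(y - S.s y)⁻¹ - (y' - S.s y')⁻¹‖
        ‖(x - S.s x) * (y - S.s y)⁻¹ - (x' - S.s x') * (y' - S.s y')⁻¹‖ ≤ δ / ‖y - S.s y‖ ^ 2 := by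
  obtain ⟨hx, hy⟩ := max_le_iff.mp hxy
  have hδ1 : δ < 1 := hδ.trans (S.s_close y)
  have hsx := S.s_eq_of_norm_sub_lt_one (hx.trans_lt hδ1)
  have hsy := S.s_eq_of_norm_sub_lt_one (hy.trans_lt hδ1)
  have hxδ : ‖(x - S.s x) - (x' - S.s x')‖ ≤ δ := by rw [hsx, sub_sub_sub_cancel_right]; exact hx
  have hyδ : ‖(y - S.s y) - (y' - S.s y')‖ ≤ δ := by rw [hsy, sub_sub_sub_cancel_right]; exact hy
  have hy' : ‖y' - S.s y'‖ = ‖y - S.s y‖ := norm_eq_of_norm_sub_lt (hyδ.trans_lt hδ)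
  refine ⟨hsx, hsy, norm_pos_iff.mp (hy' ▸ (norm_nonneg _).trans_lt (hyδ.trans_lt hδ)),
    max_le ?_ (norm_mul_inv_sub_mul_inv_le (S.s_close x).le (S.s_close y).le hxδ hyδ hδ)⟩
  simpa using norm_mul_inv_sub_mul_inv_le (u := 1) (u' := 1) norm_one.le (S.s_close y).le
    (by simpa using (norm_nonneg _).trans hxδ) hyδ hδ

theorem jacobiPerron_step_lt_zpow {x y x' y' : ℚ_[p]} {R : ℤ} (hR : R ≤ 0)
    (hy : y - S.s y ≠ 0)
    (hxy : max ‖x - x'‖ ‖y - y'‖ < (p : ℝ) ^ (2 * (R + padicValRat p (S.s (y - S.s y)⁻¹)))) :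
    S.s x = S.s x' ∧ S.s y = S.s y' ∧ y' - S.s y' ≠ 0 ∧
      max ‖(y - S.s y)⁻¹ - (y' - S.s y')⁻¹‖
        ‖(x - S.s x) * (y - S.s y)⁻¹ - (x' - S.s x') * (y' - S.s y')⁻¹‖ < (p : ℝ) ^ (2 * R) := by
  have hp : (1 : ℝ) < p := mod_cast (Fact.out : p.Prime).one_lt
  have hw := S.norm_eq_zpow_padicValRat_s_inv hy (S.s_close y)
  have hw_neg := S.padicValRat_s_inv_neg hy (S.s_close y)
  set w := padicValRat p (S.s (y - S.s y)⁻¹)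
  have hδ : max ‖x - x'‖ ‖y - y'‖ < ‖y - S.s y‖ :=
    hxy.trans_le <| hw ▸ zpow_le_zpow_right₀ hp.le (by omega)
  obtain ⟨hsx, hsy, hy', hstep⟩ := S.jacobiPerron_step le_rfl hδ
  refine ⟨hsx, hsy, hy', hstep.trans_lt ?_⟩
  calc _ < (p : ℝ) ^ (2 * (R + w)) / ‖y - S.s y‖ ^ 2 := by gcongr
    _ = (p : ℝ) ^ (2 * R) := by
      rw [hw, ← zpow_natCast, ← zpow_mul, ← zpow_sub₀ (by positivity)]; ring_nf

theorem sum_padicValRat_s_nonpos (n : ℕ) (al be : ℕ → ℚ_[p])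
    (hne : ∀ k < n, be k - (S.s (be k) : ℚ_[p]) ≠ 0)
    (hal : ∀ k < n, al (k + 1) = (be k - (S.s (be k) : ℚ_[p]))⁻¹) :
    ∑ i ∈ Finset.range n, padicValRat p (S.s (al (i + 1))) ≤ 0 :=
  Finset.sum_nonpos fun i hi => by
    have hi : i < n := Finset.mem_range.mp hi
    rw [hal i hi]
    exact (S.padicValRat_s_inv_neg (hne i hi) (S.s_close _)).le

theorem jacobiPerron_local_constancy (n : ℕ) (al be al' be' : ℕ → ℚ_[p])
    (hne : ∀ k < n, be k - (S.s (be k) : ℚ_[p]) ≠ 0)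
    (hal : ∀ k < n, al (k + 1) = (be k - (S.s (be k) : ℚ_[p]))⁻¹)
    (hbe : ∀ k < n, be (k + 1) =
      (al k - (S.s (al k) : ℚ_[p])) * (be k - (S.s (be k) : ℚ_[p]))⁻¹)
    (hal' : ∀ k, be' k - (S.s (be' k) : ℚ_[p]) ≠ 0 →
      al' (k + 1) = (be' k - (S.s (be' k) : ℚ_[p]))⁻¹ ∧
      be' (k + 1) = (al' k - (S.s (al' k) : ℚ_[p])) * (be' k - (S.s (be' k) : ℚ_[p]))⁻¹)
    (hclose : max ‖al 0 - al' 0‖ ‖be 0 - be' 0‖ <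
      (p : ℝ) ^ (2 * ∑ i ∈ Finset.range n, padicValRat p (S.s (al (i + 1))))) :
    (∀ k < n, be' k - (S.s (be' k) : ℚ_[p]) ≠ 0) ∧
      ∀ i ≤ n, S.s (al i) = S.s (al' i) ∧ S.s (be i) = S.s (be' i) := by
  induction n generalizing al be al' be' with
  | zero =>
    have h1 : max ‖al 0 - al' 0‖ ‖be 0 - be' 0‖ < 1 := by simpa using hclose
    refine ⟨fun k hk => absurd hk k.not_lt_zero, fun i hi => ?_⟩
    obtain rfl := Nat.le_zero.mp hi
    exact ⟨S.s_eq_of_norm_sub_lt_one ((le_max_left _ _).trans_lt h1),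
      S.s_eq_of_norm_sub_lt_one ((le_max_right _ _).trans_lt h1)⟩
  | succ n ih =>
    have hR := S.sum_padicValRat_s_nonpos n (fun k => al (k + 1)) (fun k => be (k + 1))
      (fun k hk => hne (k + 1) (by omega)) (fun k hk => hal (k + 1) (by omega))
    have hal0 : al 1 = _ := hal 0 n.succ_pos
    rw [Finset.sum_range_succ', zero_add, hal0] at hclose
    obtain ⟨hsa, hsb, hv', hstep⟩ := S.jacobiPerron_step_lt_zpow hR (hne 0 n.succ_pos) hclose
    obtain ⟨hal'0, hbe'0⟩ := hal' 0 hv'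
    have hclose' : max ‖al 1 - al' 1‖ ‖be 1 - be' 1‖ <
        (p : ℝ) ^ (2 * ∑ i ∈ Finset.range n, padicValRat p (S.s (al (i + 1 + 1)))) := by
      rwa [hal0, hbe 0 n.succ_pos, hal'0, hbe'0]
    obtain ⟨hne', hs⟩ := ih (fun k => al (k + 1)) (fun k => be (k + 1)) (fun k => al' (k + 1))
      (fun k => be' (k + 1)) (fun k hk => hne (k + 1) (by omega))
      (fun k hk => hal (k + 1) (by omega)) (fun k hk => hbe (k + 1) (by omega))
      (fun k => hal' (k + 1)) hclose'
    refine ⟨Nat.forall_lt_succ_left.mpr ⟨hv', hne'⟩, ?_⟩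
    rintro (_ | i) hi
    · exact ⟨hsa, hsb⟩
    · exact hs i (by omega)

end BrowkinS

end Padic

theorem pmcf_local_constancy_general (p : ℕ) [Fact (Nat.Prime p)]
    (S : BrowkinS p) (n : ℕ)
    (al be al' be' : ℕ → ℚ_[p])
    (hne : ∀ k < n, be k - (S.s (be k) : ℚ_[p]) ≠ 0)
    (hal : ∀ k < n, al (k + 1) = (be k - (S.s (be k) : ℚ_[p]))⁻¹)
    (hbe : ∀ k < n, be (k + 1) =
      (al k - (S.s (al k) : ℚ_[p])) * (be k - (S.s (be k) : ℚ_[p]))⁻¹)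
    (hal' : ∀ k, be' k - (S.s (be' k) : ℚ_[p]) ≠ 0 →
      al' (k + 1) = (be' k - (S.s (be' k) : ℚ_[p]))⁻¹ ∧
      be' (k + 1) = (al' k - (S.s (al' k) : ℚ_[p])) * (be' k - (S.s (be' k) : ℚ_[p]))⁻¹)
    (K : ℤ) (hK : K = -∑ i ∈ Finset.Icc 1 n, padicValRat p (S.s (al i)))
    (hclose : max ‖al 0 - al' 0‖ ‖be 0 - be' 0‖ < (p : ℝ) ^ (-(2 * K))) :
    (∀ k < n, be' k - (S.s (be' k) : ℚ_[p]) ≠ 0) ∧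
      ∀ i ≤ n, S.s (al i) = S.s (al' i) ∧ S.s (be i) = S.s (be' i) := by
  have hsum : ∑ i ∈ Finset.Icc 1 n, padicValRat p (S.s (al i)) =
      ∑ i ∈ Finset.range n, padicValRat p (S.s (al (i + 1))) := by
    rw [Finset.range_eq_Ico, Finset.sum_Ico_add' (fun i => padicValRat p (S.s (al i)))]
    rfl
  rw [hK, hsum, mul_neg, neg_neg] at hclose
  exact S.jacobiPerron_local_constancy n al be al' be' hne hal hbe hal' hclose

/-- Local constancy of the partial quotients: if `(α, β)` has a `p`-adic MCF expansion
of length `≥ n` and `max{|α - α'|_p, |β - β'|_p} < p^{-2K_n}`, then the MCF of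
`(α', β')` also has length `≥ n` and the first `n + 1` partial quotients agree.
Here `α = al 0`, `β = be 0`, `α' = al' 0`, `β' = be' 0`; the primed sequences follow
the Jacobi–Perron recursion whenever it is defined. -/
theorem pmcf_local_constancy (p : ℕ) [Fact (Nat.Prime p)] (hp : Odd p)
    (S : BrowkinS p) (n : ℕ)
    (al be al' be' : ℕ → ℚ_[p])
    (hne : ∀ k < n, be k - (S.s (be k) : ℚ_[p]) ≠ 0)
    (hal : ∀ k < n, al (k + 1) = (be k - (S.s (be k) : ℚ_[p]))⁻¹)
    (hbe : ∀ k < n, be (k + 1) =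
      (al k - (S.s (al k) : ℚ_[p])) * (be k - (S.s (be k) : ℚ_[p]))⁻¹)
    (hal' : ∀ k, be' k - (S.s (be' k) : ℚ_[p]) ≠ 0 →
      al' (k + 1) = (be' k - (S.s (be' k) : ℚ_[p]))⁻¹ ∧
      be' (k + 1) = (al' k - (S.s (al' k) : ℚ_[p])) * (be' k - (S.s (be' k) : ℚ_[p]))⁻¹)
    (K : ℤ) (hK : K = -∑ i ∈ Finset.Icc 1 n, padicValRat p (S.s (al i)))
    (hclose : max ‖al 0 - al' 0‖ ‖be 0 - be' 0‖ < (p : ℝ) ^ (-(2 * K))) :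
    (∀ k < n, be' k - (S.s (be' k) : ℚ_[p]) ≠ 0) ∧
      ∀ i ≤ n, S.s (al i) = S.s (al' i) ∧ S.s (be i) = S.s (be' i) :=
  pmcf_local_constancy_general p S n al be al' be' hne hal hbe hal' K hK hclose
end

section
/- Let (A_n), (B_n), (C_n) be the convergent numerators/denominators of a p-adic MCF, and let x̃ ∈ (1/2, 1) be the positive root of X³ - (1/2)X² - (1/(2p))X - 1/p³. Then there exists H > 0 such that max{|A_n|_∞, |B_n|_∞, |C_n|_∞} ≤ H (p x̃)^n for all n; in particular max{|A_n|_∞, |B_n|_∞, |C_n|_∞} = o(p^n). -/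
/-!
Since `|a_n|, |b_n| < p/2`, every row `X` of convergents satisfies
`|X_{n+3}| ≤ (p/2)|X_{n+2}| + (p/2)|X_{n+1}| + |X_n|`. With `y = p x̃` the defining equation of
`x̃` reads `y³ = (p/2)y² + (p/2)y + 1`, so `(p/2) yⁿ` dominates this majorant recursion by
induction; and `y < p` because `x̃ < 1`.
-/

theorem abs_le_mul_pow_of_recurrence {f a b : ℕ → ℝ} {c y M : ℝ}
    (hrec : ∀ n, f (n + 3) = a n * f (n + 2) + b n * f (n + 1) + f n)
    (ha : ∀ n, |a n| ≤ c) (hb : ∀ n, |b n| ≤ c)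
    (hy : 1 ≤ y) (hcube : c * y ^ 2 + c * y + 1 ≤ y ^ 3)
    (h0 : |f 0| ≤ M) (h1 : |f 1| ≤ M) (h2 : |f 2| ≤ M) (n : ℕ) :
    |f n| ≤ M * y ^ n := by
  have hc : 0 ≤ c := (abs_nonneg _).trans (ha 0)
  have hM : 0 ≤ M := (abs_nonneg _).trans h0
  have initial {k : ℕ} (hk : |f k| ≤ M) : |f k| ≤ M * y ^ k :=
    hk.trans (le_mul_of_one_le_right hM (one_le_pow₀ hy))
  induction n using Nat.strong_induction_on with
  | _ n ih =>
    match n with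
    | 0 => exact initial h0
    | 1 => exact initial h1
    | 2 => exact initial h2
    | n + 3 =>
      have hMy : 0 ≤ M * y ^ n := (abs_nonneg _).trans (ih n (by omega))
      calc |f (n + 3)|
          ≤ |a n| * |f (n + 2)| + |b n| * |f (n + 1)| + |f n| := by
            rw [hrec, ← abs_mul, ← abs_mul]
            exact abs_add_three _ _ _
        _ ≤ c * (M * y ^ (n + 2)) + c * (M * y ^ (n + 1)) + M * y ^ n := by
            gcongr
            exacts [ha n, ih _ (by omega), hb n, ih _ (by omega), ih _ (by omega)]
        _ = M * y ^ n * (c * y ^ 2 + c * y + 1) := by ring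
        _ ≤ M * y ^ n * y ^ 3 := mul_le_mul_of_nonneg_left hcube hMy
        _ = M * y ^ (n + 3) := by ring

namespace PMCF

variable {p : ℕ} [Fact (Nat.Prime p)] (m : PMCF p)

theorem abs_s_le (x : ℚ_[p]) : |(m.s x : ℝ)| ≤ (p : ℝ) / 2 := by
  have h : ((|m.s x| : ℚ) : ℝ) ≤ ((p / 2 : ℚ) : ℝ) := Rat.cast_le.mpr (m.s_bound x).le
  push_cast at h
  exact h

theorem one_le_prime_div_two : (1 : ℝ) ≤ (p : ℝ) / 2 := by
  have : (2 : ℝ) ≤ p := by exact_mod_cast (Fact.out : p.Prime).two_le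
  linarith

theorem abs_le_of_convergent_recurrence {f : ℕ → ℚ}
    (hrec : ∀ n, f (n + 3) = m.a (n + 1) * f (n + 2) + m.b (n + 1) * f (n + 1) + f n)
    (h0 : |(f 0 : ℝ)| ≤ (p : ℝ) / 2) (h1 : |(f 1 : ℝ)| ≤ (p : ℝ) / 2)
    (h2 : |(f 2 : ℝ)| ≤ (p : ℝ) / 2) {y : ℝ} (hy : 1 ≤ y)
    (hcube : (p : ℝ) / 2 * y ^ 2 + (p : ℝ) / 2 * y + 1 ≤ y ^ 3) (n : ℕ) :
    |(f n : ℝ)| ≤ (p : ℝ) / 2 * y ^ n :=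
  abs_le_mul_pow_of_recurrence (f := fun n => (f n : ℝ)) (a := fun n => (m.a (n + 1) : ℝ))
    (b := fun n => (m.b (n + 1) : ℝ))
    (fun n => by rw [hrec]; push_cast; rfl) (fun n => m.abs_s_le _) (fun n => m.abs_s_le _)
    hy hcube h0 h1 h2 n

theorem max_abs_convergents_le {y : ℝ} (hy : 1 ≤ y)
    (hcube : (p : ℝ) / 2 * y ^ 2 + (p : ℝ) / 2 * y + 1 ≤ y ^ 3) (n : ℕ) :
    max (max |(m.A n : ℝ)| |(m.B n : ℝ)|) |(m.C n : ℝ)| ≤ (p : ℝ) / 2 * y ^ n := by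
  have h1 := one_le_prime_div_two (p := p)
  have h0 : (0 : ℝ) ≤ (p : ℝ) / 2 := by linarith
  refine max_le (max_le ?_ ?_) ?_ <;>
    refine m.abs_le_of_convergent_recurrence (fun _ => rfl) ?_ ?_ ?_ hy hcube n <;>
    simp [A, B, C, a, b, h0, h1, m.abs_s_le]

end PMCF

theorem pmcf_euclidean_growth_general (p : ℕ) [Fact (Nat.Prime p)]
    (m : PMCF p) (xt : ℝ) (hx2 : 1 / 2 < xt) (hx1 : xt < 1)
    (hroot : xt ^ 3 - (1 / 2) * xt ^ 2 - (1 / (2 * (p : ℝ))) * xt - 1 / (p : ℝ) ^ 3 = 0) :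
    (∃ H > (0 : ℝ), ∀ n : ℕ,
        max (max |((PMCF.A m (n + 2) : ℚ) : ℝ)| |((PMCF.B m (n + 2) : ℚ) : ℝ)|)
            |((PMCF.C m (n + 2) : ℚ) : ℝ)| ≤ H * ((p : ℝ) * xt) ^ n) ∧
      (fun n : ℕ =>
          max (max |((PMCF.A m (n + 2) : ℚ) : ℝ)| |((PMCF.B m (n + 2) : ℚ) : ℝ)|)
              |((PMCF.C m (n + 2) : ℚ) : ℝ)|) =o[Filter.atTop]
        fun n : ℕ => (p : ℝ) ^ n := by
  have hp := PMCF.one_le_prime_div_two (p := p)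
  set y := (p : ℝ) * xt
  have hy : 1 ≤ y := by nlinarith
  have hyp : y < p := by nlinarith
  have hcube : (p : ℝ) / 2 * y ^ 2 + (p : ℝ) / 2 * y + 1 ≤ y ^ 3 := by
    have : y ^ 3 - ((p : ℝ) / 2 * y ^ 2 + (p : ℝ) / 2 * y + 1) = (p : ℝ) ^ 3 *
        (xt ^ 3 - (1 / 2) * xt ^ 2 - (1 / (2 * (p : ℝ))) * xt - 1 / (p : ℝ) ^ 3) := by
      have : (p : ℝ) ≠ 0 := by linarith
      simp only [y]
      field_simp
      ring
    rw [hroot, mul_zero, sub_eq_zero] at this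
    exact this.ge
  have hbound (n : ℕ) := calc
    max (max |((PMCF.A m (n + 2) : ℚ) : ℝ)| |((PMCF.B m (n + 2) : ℚ) : ℝ)|)
        |((PMCF.C m (n + 2) : ℚ) : ℝ)| ≤ (p : ℝ) / 2 * y ^ (n + 2) :=
      m.max_abs_convergents_le hy hcube (n + 2)
    _ = (p : ℝ) / 2 * y ^ 2 * y ^ n := by ring
  refine ⟨⟨(p : ℝ) / 2 * y ^ 2, by positivity, hbound⟩, ?_⟩
  refine (Asymptotics.isBigO_of_le' (c := (p : ℝ) / 2 * y ^ 2) _ fun n => ?_).trans_isLittleO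
    (isLittleO_pow_pow_of_lt_left (by linarith) hyp)
  rw [Real.norm_of_nonneg ((abs_nonneg _).trans (le_max_right _ _)),
    Real.norm_of_nonneg (by positivity)]
  exact hbound n

/-- Euclidean growth of the convergents: with `x̃ ∈ (1/2, 1)` the positive root of
`X³ - (1/2)X² - (1/(2p))X - 1/p³`, there is `H > 0` with
`max{|A_n|_∞, |B_n|_∞, |C_n|_∞} ≤ H (p x̃)^n`; in particular this max is `o(p^n)`. -/
theorem pmcf_euclidean_growth (p : ℕ) [Fact (Nat.Prime p)] (hp : Odd p)
    (m : PMCF p) (xt : ℝ) (hx2 : 1 / 2 < xt) (hx1 : xt < 1)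
    (hroot : xt ^ 3 - (1 / 2) * xt ^ 2 - (1 / (2 * (p : ℝ))) * xt - 1 / (p : ℝ) ^ 3 = 0) :
    (∃ H > (0 : ℝ), ∀ n : ℕ,
        max (max |((PMCF.A m (n + 2) : ℚ) : ℝ)| |((PMCF.B m (n + 2) : ℚ) : ℝ)|)
            |((PMCF.C m (n + 2) : ℚ) : ℝ)| ≤ H * ((p : ℝ) * xt) ^ n) ∧
      (fun n : ℕ =>
          max (max |((PMCF.A m (n + 2) : ℚ) : ℝ)| |((PMCF.B m (n + 2) : ℚ) : ℝ)|)
              |((PMCF.C m (n + 2) : ℚ) : ℝ)|) =o[Filter.atTop]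
        fun n : ℕ => (p : ℝ) ^ n :=
  pmcf_euclidean_growth_general p m xt hx2 hx1 hroot
end
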